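/- arXiv:1506.00603 — 6 statements merged into one kernel-verified Lean document; each statement's English description precedes it below -/
import Mathlib

section
/- Loewner–Whitney theorem: Let g be an invertible n×n real matrix. Then g is totally nonnegative if and only if g can be written as a finite product of matrices each of which is either x_i(a) for some 1 ≤ i ≤ n−1 and a > 0, or y_i(a) for some 1 ≤ i ≤ n−1 and a > 0, or a diagonal matrix with strictly positive diagonal entries. In other words, GL(n)_{≥0} is the subsemigroup of GL(n,ℝ) generated by the positive Chevalley generators and the positive diagonal matrices. -/
/-- A square real matrix is totally nonnegative if every minor (determinant of any
square submatrix, with rows and columns taken in order) is nonnegative. -/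
def TotallyNonneg {n : ℕ} (A : Matrix (Fin n) (Fin n) ℝ) : Prop :=
  ∀ (m : ℕ) (f g : Fin m → Fin n), StrictMono f → StrictMono g →
    0 ≤ (A.submatrix f g).det

/-- The Chevalley generator `x_i(a) = I + a E_{i,j}` (with `j = i+1`). -/
def chevX (n : ℕ) (i j : Fin n) (a : ℝ) : Matrix (Fin n) (Fin n) ℝ :=
  1 + Matrix.single i j a

/-- The Chevalley generator `y_i(a) = I + a E_{j,i}` (with `j = i+1`). -/
def chevY (n : ℕ) (i j : Fin n) (a : ℝ) : Matrix (Fin n) (Fin n) ℝ :=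
  1 + Matrix.single j i a

namespace LW
open Matrix

variable {n : ℕ}

abbrev Mat (n : ℕ) := Matrix (Fin n) (Fin n) ℝ

/-- the window map `p ↦ a + p` : rows `a, a+1, ..., a+m-1`. -/
def win (a : ℕ) {m : ℕ} (h : a + m ≤ n) : Fin m → Fin n :=
  fun p => ⟨a + p.1, by have := p.isLt; omega⟩

lemma win_strictMono (a : ℕ) {m : ℕ} (h : a + m ≤ n) : StrictMono (win (n := n) a h) := by
  intro p q hpq
  simp only [win, Fin.lt_def] at *
  omega

/-- consecutive-rows total nonnegativity: all minors whose row set is an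
interval are nonnegative. -/
def CTNN (g : Mat n) : Prop :=
  ∀ (m a : ℕ) (h : a + m ≤ n) (f : Fin m → Fin n), StrictMono f →
    0 ≤ (g.submatrix (win a h) f).det

lemma tnn_ctnn {g : Mat n} (hg : TotallyNonneg g) : CTNN g :=
  fun m a h f hf => hg m (win a h) f (win_strictMono a h) hf

lemma CTNN.entry {g : Mat n} (hg : CTNN g) (r c : Fin n) : 0 ≤ g r c := by
  have h1 : (r : ℕ) + 1 ≤ n := r.isLt
  have := hg 1 r h1 (fun _ => c) (Subsingleton.strictMono _)
  rwa [det_fin_one, submatrix_apply, show win (r:ℕ) h1 0 = r from Fin.ext (by simp [win])] at this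

lemma CTNN.two {g : Mat n} (hg : CTNN g) (r : ℕ) (hr : r + 2 ≤ n) {c₁ c₂ : Fin n}
    (hc : c₁ < c₂) :
    0 ≤ g ⟨r, by omega⟩ c₁ * g ⟨r+1, by omega⟩ c₂ - g ⟨r, by omega⟩ c₂ * g ⟨r+1, by omega⟩ c₁ := by
  have hf : StrictMono (fun q : Fin 2 => if (q : ℕ) = 0 then c₁ else c₂) := by
    intro p q hpq
    have hp := p.isLt; have hq := q.isLt
    have : (p : ℕ) = 0 ∧ (q : ℕ) = 1 := by rw [Fin.lt_def] at hpq; omega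
    simp [this.1, this.2, hc]
  have := hg 2 r hr _ hf
  rw [det_fin_two] at this
  simpa [win, submatrix_apply] using this

lemma strictMono_eq_of_range {m : ℕ} {f g : Fin m → Fin n} (hf : StrictMono f)
    (hg : StrictMono g) (h : Finset.image f Finset.univ = Finset.image g Finset.univ) :
    f = g := by
  have hcf : (Finset.image f Finset.univ).card = m := by
    rw [Finset.card_image_of_injective _ hf.injective, Finset.card_univ, Fintype.card_fin]
  have h1 := Finset.orderEmbOfFin_unique hcf (fun i => Finset.mem_image_of_mem f (Finset.mem_univ i)) hf
  have hcg : (Finset.image f Finset.univ).card = m := hcf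
  have h2 := Finset.orderEmbOfFin_unique hcf (fun i => by rw [h]; exact Finset.mem_image_of_mem g (Finset.mem_univ i)) hg
  rw [h2]; exact h1

lemma tnn_diagonal (d : Fin n → ℝ) (hd : ∀ i, 0 ≤ d i) : TotallyNonneg (diagonal d) := by
  intro m f g hf hg
  by_cases h : Finset.image f Finset.univ = Finset.image g Finset.univ
  · have hfg := strictMono_eq_of_range hf hg h
    subst hfg
    have : (diagonal d).submatrix f f = diagonal (fun p => d (f p)) := by
      ext p q
      by_cases hpq : p = q
      · subst hpq; simp
      · rw [submatrix_apply, diagonal_apply_ne _ (fun hc => hpq (hf.injective hc)),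
          diagonal_apply_ne _ hpq]
    rw [this, det_diagonal]
    exact Finset.prod_nonneg fun p _ => hd _
  · by_cases h2 : ∀ p, f p ∈ Finset.image g Finset.univ
    · exfalso
      apply h
      apply Finset.eq_of_subset_of_card_le
      · intro x hx
        obtain ⟨p, _, rfl⟩ := Finset.mem_image.mp hx
        exact h2 p
      · rw [Finset.card_image_of_injective _ hg.injective,
          Finset.card_image_of_injective _ hf.injective]
    · push_neg at h2
      obtain ⟨p, hp⟩ := h2
      have hrow : ∀ q, ((diagonal d).submatrix f g) p q = 0 := by
        intro q
        rw [submatrix_apply, diagonal_apply_ne]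
        intro hc
        exact hp (hc ▸ Finset.mem_image_of_mem g (Finset.mem_univ q))
      exact le_of_eq (det_eq_zero_of_row_eq_zero p hrow).symm

lemma tnn_one : TotallyNonneg (1 : Mat n) := by
  have := tnn_diagonal (n := n) (fun _ => (1:ℝ)) (fun _ => zero_le_one)
  rwa [diagonal_one] at this


lemma tnn_chevX_mul {i j : Fin n} (hij : (j : ℕ) = (i : ℕ) + 1) {a : ℝ} (ha : 0 ≤ a)
    {M : Mat n} (hM : TotallyNonneg M) : TotallyNonneg (chevX n i j a * M) := by
  have hXT : chevX n i j a = transvection i j a := rfl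
  intro m f g hf hg
  by_cases hex : ∃ p, f p = i
  · obtain ⟨p₀, hp₀⟩ := hex
    have hsub : (chevX n i j a * M).submatrix f g =
        updateRow (M.submatrix f g) p₀ (M.submatrix f g p₀ + a • fun q => M j (g q)) := by
      ext p q
      by_cases hp : p = p₀
      · subst hp
        rw [updateRow_self, hXT, submatrix_apply, hp₀, Pi.add_apply,
          transvection_mul_apply_same, Pi.smul_apply, smul_eq_mul, submatrix_apply, hp₀]
      · rw [updateRow_ne hp, hXT, submatrix_apply, submatrix_apply,
          transvection_mul_apply_of_ne _ _ _ _ (fun hc : f p = _ => hp (hf.injective (hc.trans hp₀.symm))) a M]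
    rw [hsub, det_updateRow_add, det_updateRow_smul, updateRow_eq_self]
    have h1 : 0 ≤ (M.submatrix f g).det := hM m f g hf hg
    suffices h2 : 0 ≤ ((M.submatrix f g).updateRow p₀ fun q => M j (g q)).det by
      have := mul_nonneg ha h2; linarith
    by_cases hexj : ∃ p₁, f p₁ = j
    · obtain ⟨p₁, hp₁⟩ := hexj
      have hne : p₀ ≠ p₁ := by
        intro hc
        rw [hc, hp₁] at hp₀
        rw [hp₀] at hij; omega
      apply le_of_eq
      refine (det_zero_of_row_eq hne ?_).symm
      rw [updateRow_self, updateRow_ne hne.symm]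
      funext q
      rw [submatrix_apply, hp₁]
    · push_neg at hexj
      set f' : Fin m → Fin n := fun p => if p = p₀ then j else f p with hf'
      have heq : (M.submatrix f g).updateRow p₀ (fun q => M j (g q)) = M.submatrix f' g := by
        ext p q
        by_cases hp : p = p₀
        · subst hp; simp [hf', updateRow_self]
        · simp [hf', updateRow_ne hp, hp]
      have hmono : StrictMono f' := by
        have key1 : ∀ p, p₀ < p → (j : ℕ) < (f p : ℕ) := by
          intro p hp
          have h1 : (i : ℕ) < (f p : ℕ) := Fin.lt_def.mp (hp₀ ▸ hf hp)
          have h3 : (f p : ℕ) ≠ (j : ℕ) := fun hc => (hexj p) (Fin.ext hc)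
          omega
        intro p q hpq
        rw [Fin.lt_def]
        by_cases hp : p = p₀ <;> by_cases hq : q = p₀
        · exact absurd (hp.trans hq.symm) (ne_of_lt hpq)
        · simp only [hf', if_pos hp, if_neg hq]
          exact key1 q (hp ▸ hpq)
        · simp only [hf', if_neg hp, if_pos hq]
          have h4 : (f p : ℕ) < (i : ℕ) := Fin.lt_def.mp (hp₀ ▸ hf (hq ▸ hpq))
          omega
        · simp only [hf', if_neg hp, if_neg hq]
          exact Fin.lt_def.mp (hf hpq)
      rw [heq]
      exact hM m f' g hmono hg
  · push_neg at hex
    have : (chevX n i j a * M).submatrix f g = M.submatrix f g := by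
      ext p q
      rw [hXT, submatrix_apply, submatrix_apply, transvection_mul_apply_of_ne _ _ _ _ (hex p) a M]
    rw [this]
    exact hM m f g hf hg

lemma tnn_chevY_mul {i j : Fin n} (hij : (j : ℕ) = (i : ℕ) + 1) {a : ℝ} (ha : 0 ≤ a)
    {M : Mat n} (hM : TotallyNonneg M) : TotallyNonneg (chevY n i j a * M) := by
  have hXT : chevY n i j a = transvection j i a := rfl
  intro m f g hf hg
  by_cases hex : ∃ p, f p = j
  · obtain ⟨p₀, hp₀⟩ := hex
    have hsub : (chevY n i j a * M).submatrix f g =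
        updateRow (M.submatrix f g) p₀ (M.submatrix f g p₀ + a • fun q => M i (g q)) := by
      ext p q
      by_cases hp : p = p₀
      · subst hp
        rw [updateRow_self, hXT, submatrix_apply, hp₀, Pi.add_apply,
          transvection_mul_apply_same, Pi.smul_apply, smul_eq_mul, submatrix_apply, hp₀]
      · rw [updateRow_ne hp, hXT, submatrix_apply, submatrix_apply,
          transvection_mul_apply_of_ne _ _ _ _ (fun hc : f p = _ => hp (hf.injective (hc.trans hp₀.symm))) a M]
    rw [hsub, det_updateRow_add, det_updateRow_smul, updateRow_eq_self]
    have h1 : 0 ≤ (M.submatrix f g).det := hM m f g hf hg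
    suffices h2 : 0 ≤ ((M.submatrix f g).updateRow p₀ fun q => M i (g q)).det by
      have := mul_nonneg ha h2; linarith
    by_cases hexj : ∃ p₁, f p₁ = i
    · obtain ⟨p₁, hp₁⟩ := hexj
      have hne : p₀ ≠ p₁ := by
        intro hc
        rw [hc, hp₁] at hp₀
        rw [← hp₀] at hij; omega
      apply le_of_eq
      refine (det_zero_of_row_eq hne ?_).symm
      rw [updateRow_self, updateRow_ne hne.symm]
      funext q
      rw [submatrix_apply, hp₁]
    · push_neg at hexj
      set f' : Fin m → Fin n := fun p => if p = p₀ then i else f p with hf'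
      have heq : (M.submatrix f g).updateRow p₀ (fun q => M i (g q)) = M.submatrix f' g := by
        ext p q
        by_cases hp : p = p₀
        · subst hp; simp [hf', updateRow_self]
        · simp [hf', updateRow_ne hp, hp]
      have hmono : StrictMono f' := by
        have key1 : ∀ p, p < p₀ → (f p : ℕ) < (i : ℕ) := by
          intro p hp
          have h1 : (f p : ℕ) < (j : ℕ) := Fin.lt_def.mp (hp₀ ▸ hf hp)
          have h3 : (f p : ℕ) ≠ (i : ℕ) := fun hc => (hexj p) (Fin.ext hc)
          omega
        intro p q hpq
        rw [Fin.lt_def]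
        by_cases hp : p = p₀ <;> by_cases hq : q = p₀
        · exact absurd (hp.trans hq.symm) (ne_of_lt hpq)
        · simp only [hf', if_pos hp, if_neg hq]
          have h4 : (j : ℕ) < (f q : ℕ) := Fin.lt_def.mp (hp₀ ▸ hf (hp ▸ hpq))
          omega
        · simp only [hf', if_neg hp, if_pos hq]
          exact key1 p (hq ▸ hpq)
        · simp only [hf', if_neg hp, if_neg hq]
          exact Fin.lt_def.mp (hf hpq)
      rw [heq]
      exact hM m f' g hmono hg
  · push_neg at hex
    have : (chevY n i j a * M).submatrix f g = M.submatrix f g := by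
      ext p q
      rw [hXT, submatrix_apply, submatrix_apply, transvection_mul_apply_of_ne _ _ _ _ (hex p) a M]
    rw [this]
    exact hM m f g hf hg

lemma tnn_diagonal_mul (d : Fin n → ℝ) (hd : ∀ i, 0 ≤ d i) {M : Mat n}
    (hM : TotallyNonneg M) : TotallyNonneg (diagonal d * M) := by
  intro m f g hf hg
  have hsub : (diagonal d * M).submatrix f g =
      diagonal (fun p => d (f p)) * M.submatrix f g := by
    ext p q
    rw [submatrix_apply, diagonal_mul, diagonal_mul, submatrix_apply]
  rw [hsub, det_mul, det_diagonal]
  exact mul_nonneg (Finset.prod_nonneg fun p _ => hd _) (hM m f g hf hg)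


def CleanBelow (g : Mat n) (J : ℕ) : Prop :=
  ∀ r c : Fin n, (c : ℕ) < J → (c : ℕ) < (r : ℕ) → g r c = 0

def LowerTri (g : Mat n) : Prop := ∀ r c : Fin n, (r : ℕ) < (c : ℕ) → g r c = 0

def UpperTri (g : Mat n) : Prop := ∀ r c : Fin n, (c : ℕ) < (r : ℕ) → g r c = 0

set_option maxHeartbeats 1600000 in
lemma step {g : Mat n} (hdet : g.det ≠ 0) (hct : CTNN g) {j i : ℕ} (hjn : j < n) (hin : i < n)
    (hji : j < i) (hclean : CleanBelow g j)
    (hgi : g ⟨i, hin⟩ ⟨j, hjn⟩ ≠ 0)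
    (hmax : ∀ r : Fin n, i < (r : ℕ) → g r ⟨j, hjn⟩ = 0) :
    ∃ t : ℝ, 0 < t ∧ ∃ g' : Mat n,
      g = chevY n ⟨i - 1, by omega⟩ ⟨i, hin⟩ t * g' ∧
      g'.det = g.det ∧ CTNN g' ∧ CleanBelow g' j ∧
      g' ⟨i, hin⟩ ⟨j, hjn⟩ = 0 ∧
      (∀ r : Fin n, (r : ℕ) ≠ i → g' r = g r) ∧
      (LowerTri g → LowerTri g') := by
  set iF : Fin n := ⟨i, hin⟩ with hiF
  set i' : Fin n := ⟨i - 1, by omega⟩ with hi'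
  set jF : Fin n := ⟨j, hjn⟩ with hjF
  have hii' : i' ≠ iF := by intro h; rw [Fin.ext_iff] at h; simp [hiF, hi'] at h; omega
  have hipos : 0 < g iF jF := lt_of_le_of_ne (hct.entry _ _) (Ne.symm hgi)
  -- the pivot is nonzero
  have hpiv : g i' jF ≠ 0 := by
    intro h0
    have hrow : ∀ c : Fin n, g i' c = 0 := by
      intro c
      rcases lt_trichotomy (c : ℕ) j with hc | hc | hc
      · exact hclean i' c hc (by simp only [hi']; omega)
      · have : c = jF := Fin.ext (by simp [hjF, hc])
        rw [this]; exact h0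
      · have h2 := hct.two (i-1) (by omega) (c₁ := jF) (c₂ := c) (Fin.lt_def.mpr (by simp [hjF] <;> omega))
        have he1 : (⟨i-1, by omega⟩ : Fin n) = i' := rfl
        have he2 : (⟨i-1+1, by omega⟩ : Fin n) = iF := Fin.ext (by simp [hiF] <;> omega)
        rw [he1, he2, h0] at h2
        have h3 : 0 ≤ g i' c := hct.entry _ _
        nlinarith
    exact hdet (det_eq_zero_of_row_eq_zero i' hrow)
  have hpivpos : 0 < g i' jF := lt_of_le_of_ne (hct.entry _ _) (Ne.symm hpiv)
  set t : ℝ := g iF jF / g i' jF with ht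
  have htpos : 0 < t := div_pos hipos hpivpos
  set g' : Mat n := updateRow g iF (g iF + (-t) • g i') with hg'
  have hrow_ne : ∀ r : Fin n, (r : ℕ) ≠ i → g' r = g r := by
    intro r hr
    rw [hg', updateRow_ne (fun hc => hr (by rw [hc]))]
  have hrow_i : ∀ c, g' iF c = g iF c - t * g i' c := by
    intro c
    rw [hg', updateRow_self]
    simp only [Pi.add_apply, Pi.smul_apply, smul_eq_mul]
    ring
  refine ⟨t, htpos, g', ?_, ?_, ?_, ?_, ?_, hrow_ne, ?_⟩
  · -- g = chevY * g'
    have hYT : chevY n i' iF t = transvection iF i' t := rfl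
    ext r c
    by_cases hr : r = iF
    · subst hr
      rw [hYT, transvection_mul_apply_same, hrow_i, hrow_ne i' (by simp [hi'] <;> omega)]
      ring
    · rw [hYT, transvection_mul_apply_of_ne _ _ _ _ hr t g',
        hrow_ne r (fun hc => hr (Fin.ext hc))]
  · -- det
    rw [hg']
    exact det_updateRow_add_smul_self g hii'.symm (-t)
  · -- CTNN g' : the main case analysis
    intro m a hma f hf
    by_cases hiS : a ≤ i ∧ i < a + m
    · obtain ⟨hai, him⟩ := hiS
      set p₀ : Fin m := ⟨i - a, by omega⟩ with hp₀
      have hrepr : g'.submatrix (win a hma) f =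
          updateRow (g.submatrix (win a hma) f) p₀
            ((g.submatrix (win a hma) f) p₀ + (-t) • fun q => g i' (f q)) := by
        ext p q
        by_cases hp : p = p₀
        · subst hp
          rw [updateRow_self]
          simp only [Pi.add_apply, Pi.smul_apply, smul_eq_mul, submatrix_apply]
          have hwin : win a hma p₀ = iF := Fin.ext (by simp [win, hp₀, hiF] <;> omega)
          rw [hwin, hrow_i]
          ring
        · rw [updateRow_ne hp, submatrix_apply, submatrix_apply, hrow_ne]
          have hpv : (p : ℕ) ≠ i - a := fun hc => hp (Fin.ext (by rw [hp₀]; exact hc))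
          simp only [win]
          omega
      by_cases hacase : a < i
      · -- i-1 is also a row of the minor : row operation, determinant unchanged
        set p₁ : Fin m := ⟨i - 1 - a, by omega⟩ with hp₁
        have hne : p₀ ≠ p₁ := by
          rw [Fin.ne_iff_vne]
          simp only [hp₀, hp₁]
          omega
        have hN1 : (fun q => g i' (f q)) = (g.submatrix (win a hma) f) p₁ := by
          funext q
          rw [submatrix_apply]
          congr 1
          exact Fin.ext (by simp [win, hp₁, hi'] <;> omega)
        rw [hrepr, hN1, det_updateRow_add_smul_self _ hne (-t)]
        exact hct m a hma f hf
      · -- i = a : the pivot row is the first row of the minor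
        have ha : a = i := by omega
        subst ha
        obtain ⟨m', rfl⟩ : ∃ m', m = m' + 1 := ⟨m - 1, by omega⟩
        have hp₀0 : p₀ = 0 := Fin.ext (by simp [hp₀])
        by_cases hcol : ∃ q, (f q : ℕ) < j
        · -- a column of the minor lies strictly left of column j : zero column
          obtain ⟨q₀, hq₀⟩ := hcol
          have hzero : ∀ p, (g'.submatrix (win a hma) f) p q₀ = 0 := by
            intro p
            rw [submatrix_apply]
            by_cases hp : (p : ℕ) = 0
            · have hwp : win a hma p = iF := Fin.ext (by simp [win, hiF, hp])
              rw [hwp, hrow_i, hclean iF (f q₀) hq₀ (by simp [hiF] <;> omega),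
                hclean i' (f q₀) hq₀ (by simp [hi'] <;> omega)]
              ring
            · rw [hrow_ne _ (by simp only [win, Fin.val_mk]; omega)]
              exact hclean _ _ hq₀ (by simp [win] <;> omega)
          exact le_of_eq (det_eq_zero_of_column_eq_zero q₀ hzero).symm
        · push_neg at hcol
          -- rows of the companion minor (row i replaced by row i-1)
          set f' : Fin (m' + 1) → Fin n :=
            fun p => if (p : ℕ) = 0 then i' else win a hma p with hf'
          set N := g.submatrix (win a hma) f with hN
          have hupd : updateRow N p₀ (fun q => g i' (f q)) = g.submatrix f' f := by
            ext p q
            by_cases hp : p = p₀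
            · subst hp
              rw [updateRow_self, submatrix_apply, hf']
              simp only [hp₀0]
              norm_num
            · have hpv : (p : ℕ) ≠ 0 := by
                intro hc
                exact hp (Fin.ext (by simp [hp₀, hc]))
              rw [updateRow_ne hp, hN, submatrix_apply, submatrix_apply, hf']
              simp only [if_neg hpv]
          have hdetsplit : (g'.submatrix (win a hma) f).det
              = N.det + (-t) * (g.submatrix f' f).det := by
            rw [hrepr, det_updateRow_add, det_updateRow_smul, updateRow_eq_self, hupd]
          rw [hdetsplit]
          -- expansions along column 0
          by_cases hj0 : (f 0 : ℕ) = j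
          · -- column j is the first column of the minor : both dets factor, cancel
            have hf0 : f 0 = jF := Fin.ext hj0
            have hexpN : N.det = g iF jF * (N.submatrix Fin.succ Fin.succ).det := by
              rw [det_succ_column_zero, Fin.sum_univ_succ]
              have hz : ∀ p : Fin m', (-1 : ℝ) ^ ((p.succ : Fin (m' + 1)) : ℕ) * N p.succ 0 *
                  (N.submatrix p.succ.succAbove Fin.succ).det = 0 := by
                intro p
                have hNz : N p.succ 0 = 0 := by
                  rw [hN, submatrix_apply, hf0]
                  exact hmax _ (by simp [win] <;> omega)
                rw [hNz]; ring
              rw [Finset.sum_eq_zero (fun p _ => hz p), add_zero]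
              have hN00 : N 0 0 = g iF jF := by
                rw [hN, submatrix_apply, hf0]
                congr 1
              rw [hN00, Fin.succAbove_zero]
              simp
            have hexpS : (g.submatrix f' f).det
                = g i' jF * (N.submatrix Fin.succ Fin.succ).det := by
              rw [det_succ_column_zero, Fin.sum_univ_succ]
              have hz : ∀ p : Fin m', (-1 : ℝ) ^ ((p.succ : Fin (m' + 1)) : ℕ) *
                  (g.submatrix f' f) p.succ 0 *
                  ((g.submatrix f' f).submatrix p.succ.succAbove Fin.succ).det = 0 := by
                intro p
                have hNz : (g.submatrix f' f) p.succ 0 = 0 := by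
                  have hnz0 : ((p.succ : Fin (m' + 1)) : ℕ) ≠ 0 := by simp
                  rw [submatrix_apply, hf0, hf']
                  simp only [if_neg hnz0]
                  exact hmax _ (by simp [win] <;> omega)
                rw [hNz]; ring
              rw [Finset.sum_eq_zero (fun p _ => hz p), add_zero]
              have hS00 : (g.submatrix f' f) 0 0 = g i' jF := by
                rw [submatrix_apply, hf0, hf']
                norm_num
              have hSsub : (g.submatrix f' f).submatrix Fin.succ Fin.succ
                  = N.submatrix Fin.succ Fin.succ := by
                ext p q
                have hnz0 : ((p.succ : Fin (m' + 1)) : ℕ) ≠ 0 := by simp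
                simp only [submatrix_apply, hN, hf', if_neg hnz0]
              rw [hS00, Fin.succAbove_zero, hSsub]
              simp
            rw [hexpN, hexpS, ht]
            have hc : g iF jF / g i' jF * g i' jF = g iF jF := div_mul_cancel₀ _ hpiv
            have : g iF jF * (N.submatrix Fin.succ Fin.succ).det +
                -(g iF jF / g i' jF) * (g i' jF * (N.submatrix Fin.succ Fin.succ).det) = 0 := by
              linear_combination (-(N.submatrix Fin.succ Fin.succ).det) * hc
            rw [this]
          · -- all columns lie strictly right of j : bordered minor, TNN gives the bound
            have hall : ∀ q, j < (f q : ℕ) := by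
              intro q
              have h1 : j ≤ (f q : ℕ) := hcol q
              have h4 : (f 0 : ℕ) ≤ (f q : ℕ) := Fin.le_def.mp (hf.monotone (Fin.zero_le q))
              have h3 : j ≤ (f 0 : ℕ) := hcol 0
              omega
            have hR : (a - 1) + (m' + 2) ≤ n := by omega
            set G : Fin (m' + 2) → Fin n :=
              fun q => if h : (q : ℕ) = 0 then jF else f ⟨q - 1, by have := q.isLt; omega⟩
              with hG
            have hGmono : StrictMono G := by
              intro q q' hqq
              rw [Fin.lt_def]
              by_cases hq : (q : ℕ) = 0 <;> by_cases hq' : (q' : ℕ) = 0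
              · exfalso; rw [Fin.lt_def] at hqq; omega
              · simp only [hG, dif_pos hq, dif_neg hq', hjF]
                exact hall _
              · exfalso; rw [Fin.lt_def] at hqq; omega
              · simp only [hG, dif_neg hq, dif_neg hq']
                have : (⟨(q : ℕ) - 1, by have := q.isLt; omega⟩ : Fin (m' + 1))
                    < ⟨(q' : ℕ) - 1, by have := q'.isLt; omega⟩ := by
                  rw [Fin.lt_def]; rw [Fin.lt_def] at hqq; simp; omega
                exact hf this
            have hW := hct (m' + 2) (a - 1) hR G hGmono
            set W := g.submatrix (win (a - 1) hR) G with hWdef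
            have hexpW : W.det = g i' jF * N.det - g iF jF * (g.submatrix f' f).det := by
              rw [det_succ_column_zero, Fin.sum_univ_succ, Fin.sum_univ_succ]
              have hz : ∀ p : Fin m', (-1 : ℝ) ^ (((p.succ).succ : Fin (m' + 2)) : ℕ) *
                  W (p.succ).succ 0 *
                  (W.submatrix ((p.succ).succ).succAbove Fin.succ).det = 0 := by
                intro p
                have hWz : W (p.succ).succ 0 = 0 := by
                  rw [hWdef, submatrix_apply]
                  have hG0 : G 0 = jF := by simp [hG]
                  rw [hG0]
                  exact hmax _ (by simp [win] <;> omega)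
                rw [hWz]; ring
              rw [Finset.sum_eq_zero (fun p _ => hz p), add_zero]
              have hW00 : W 0 0 = g i' jF := by
                rw [hWdef, submatrix_apply]
                have hG0 : G 0 = jF := by simp [hG]
                rw [hG0]
                congr 1
              have hW10 : W (0 : Fin (m' + 1)).succ 0 = g iF jF := by
                rw [hWdef, submatrix_apply]
                have hG0 : G 0 = jF := by simp [hG]
                rw [hG0]
                congr 1
                exact Fin.ext (by simp [win, hiF] <;> omega)
              have hWA : W.submatrix (Fin.succAbove 0) Fin.succ = N := by
                ext p q
                rw [Fin.succAbove_zero, submatrix_apply, hWdef, submatrix_apply, hN,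
                  submatrix_apply]
                have hrow : win (a - 1) hR p.succ = win a hma p := by
                  apply Fin.ext; simp [win] <;> omega
                have hcol' : G q.succ = f q := by
                  rw [hG]
                  simp only [Fin.val_succ, dif_neg (Nat.succ_ne_zero _)]
                  congr 1
                rw [hrow, hcol']
              have hWB : W.submatrix ((0 : Fin (m' + 1)).succ).succAbove Fin.succ
                  = g.submatrix f' f := by
                ext p q
                rw [submatrix_apply, hWdef, submatrix_apply, submatrix_apply]
                have hcol' : G q.succ = f q := by
                  rw [hG]
                  simp only [Fin.val_succ, dif_neg (Nat.succ_ne_zero _)]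
                  congr 1
                rw [hcol']
                congr 1
                -- rows : succAbove 1 sends 0 ↦ 0 (row i-1) and p ≥ 1 ↦ p+1 (row i+p)
                simp only [hf']
                by_cases hp : (p : ℕ) = 0
                · rw [if_pos hp,
                    Fin.succAbove_of_castSucc_lt _ _ (by rw [Fin.lt_def]; simp [hp])]
                  apply Fin.ext
                  rw [hi']
                  simp [win, hp]
                · rw [if_neg hp,
                    Fin.succAbove_of_le_castSucc _ _ (by rw [Fin.le_def]; simp; omega)]
                  apply Fin.ext
                  simp [win]
                  omega
              rw [hW00, hW10, hWA, hWB]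
              simp
              ring
            rw [hexpW] at hW
            have h2 : (g iF jF / g i' jF) * (g.submatrix f' f).det ≤ N.det := by
              rw [div_mul_eq_mul_div, div_le_iff₀ hpivpos]
              nlinarith [hW]
            rw [ht]
            linarith
    · -- row i is not involved : the minor is unchanged
      have : g'.submatrix (win a hma) f = g.submatrix (win a hma) f := by
        ext p q
        rw [submatrix_apply, submatrix_apply, hrow_ne]
        have := p.isLt
        simp only [win]
        omega
      rw [this]
      exact hct m a hma f hf
  · -- CleanBelow g' j
    intro r c hc hcr
    by_cases hr : (r : ℕ) = i
    · have hr' : r = iF := Fin.ext hr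
      rw [hr', hrow_i, hclean iF c hc (by simp [hiF] <;> omega),
        hclean i' c hc (by simp [hi'] <;> omega)]
      ring
    · rw [hrow_ne r hr]; exact hclean r c hc hcr
  · -- cleared entry
    rw [hrow_i, ht]
    field_simp
    ring
  · -- LowerTri preserved
    intro hlow r c hrc
    by_cases hr : (r : ℕ) = i
    · have hr' : r = iF := Fin.ext hr
      rw [hr', hrow_i, hlow iF c (by simp [hiF] <;> omega ),
        hlow i' c (by simp [hi'] <;> omega)]
      ring
    · rw [hrow_ne r hr]; exact hlow r c hrc


def IsGenY (n : ℕ) (A : Mat n) : Prop :=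
  ∃ (i j : Fin n) (a : ℝ), (j : ℕ) = (i : ℕ) + 1 ∧ 0 < a ∧ A = chevY n i j a

lemma phase1 (k : ℕ) : ∀ (m : ℕ) (g : Mat n), g.det ≠ 0 → CTNN g → CleanBelow g (n - k) →
    (∀ hjn : n - k < n,
      (Finset.univ.filter
        (fun r : Fin n => n - k < (r : ℕ) ∧ g r ⟨n - k, hjn⟩ ≠ 0)).card ≤ m) →
    ∃ L : List (Mat n), (∀ A ∈ L, IsGenY n A) ∧
      ∃ u : Mat n, UpperTri u ∧ u.det ≠ 0 ∧ CTNN u ∧ (LowerTri g → LowerTri u) ∧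
        g = L.prod * u := by
  induction k with
  | zero =>
    intro m g hdet hct hclean _
    exact ⟨[], by simp, g, (fun r c h => hclean r c (by omega) h), hdet, hct, fun h => h,
      by simp⟩
  | succ k ih =>
    have move : ∀ g : Mat n, g.det ≠ 0 → CTNN g → CleanBelow g (n - (k+1)) →
        (∀ hjn : n - (k+1) < n, ∀ r : Fin n, n - (k+1) < (r : ℕ) →
          g r ⟨n - (k+1), hjn⟩ = 0) →
        ∃ L : List (Mat n), (∀ A ∈ L, IsGenY n A) ∧
          ∃ u : Mat n, UpperTri u ∧ u.det ≠ 0 ∧ CTNN u ∧ (LowerTri g → LowerTri u) ∧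
            g = L.prod * u := by
      intro g hdet hct hclean hcol
      apply ih n g hdet hct
      · intro r c hc hcr
        have hcn := c.isLt
        rcases (by omega : (c : ℕ) < n - (k+1) ∨ ((c : ℕ) = n - (k+1) ∧ n - (k+1) < n))
          with h | ⟨h1, h2⟩
        · exact hclean r c h hcr
        · have hceq : c = ⟨n - (k+1), h2⟩ := Fin.ext h1
          rw [hceq]
          exact hcol h2 r (by omega)
      · intro hjn
        calc (Finset.univ.filter _).card ≤ Finset.univ.card := Finset.card_filter_le _ _
        _ = n := by simp
    intro m
    induction m with
    | zero =>
      intro g hdet hct hclean hbad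
      apply move g hdet hct hclean
      intro hjn r hr
      by_contra hne
      have hmem : r ∈ Finset.univ.filter
          (fun r : Fin n => n - (k+1) < (r : ℕ) ∧ g r ⟨n - (k+1), hjn⟩ ≠ 0) :=
        Finset.mem_filter.mpr ⟨Finset.mem_univ _, hr, hne⟩
      have hcard := hbad hjn
      have : 0 < (Finset.univ.filter
          (fun r : Fin n => n - (k+1) < (r : ℕ) ∧ g r ⟨n - (k+1), hjn⟩ ≠ 0)).card :=
        Finset.card_pos.mpr ⟨r, hmem⟩
      omega
    | succ m ihm =>
      intro g hdet hct hclean hbad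
      by_cases hcol : ∀ hjn : n - (k+1) < n, ∀ r : Fin n, n - (k+1) < (r : ℕ) →
          g r ⟨n - (k+1), hjn⟩ = 0
      · exact move g hdet hct hclean hcol
      · push_neg at hcol
        obtain ⟨hjn, r₀, hr₀, hne₀⟩ := hcol
        set S := Finset.univ.filter
          (fun r : Fin n => n - (k+1) < (r : ℕ) ∧ g r ⟨n - (k+1), hjn⟩ ≠ 0) with hS
        have hSne : S.Nonempty := ⟨r₀, Finset.mem_filter.mpr ⟨Finset.mem_univ _, hr₀, hne₀⟩⟩
        set I := S.max' hSne with hI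
        have hIS : I ∈ S := S.max'_mem hSne
        have hIfacts := Finset.mem_filter.mp hIS
        have hIj : n - (k+1) < (I : ℕ) := hIfacts.2.1
        have hIne : g I ⟨n - (k+1), hjn⟩ ≠ 0 := hIfacts.2.2
        have hImax : ∀ r : Fin n, (I : ℕ) < (r : ℕ) → g r ⟨n - (k+1), hjn⟩ = 0 := by
          intro r hr
          by_contra hne
          have hrS : r ∈ S := Finset.mem_filter.mpr ⟨Finset.mem_univ _, by omega, hne⟩
          have := S.le_max' r hrS
          rw [← hI] at this
          rw [Fin.le_def] at this
          omega
        have hIeta : (⟨(I : ℕ), I.isLt⟩ : Fin n) = I := Fin.ext rfl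
        obtain ⟨t, ht, g', hfac, hdet', hct', hclean', hzero, hunch, hlow'⟩ :=
          step hdet hct hjn I.isLt hIj hclean (hIeta ▸ hIne) hImax
        have hdetne : g'.det ≠ 0 := by rw [hdet']; exact hdet
        have hbad' : ∀ hjn' : n - (k+1) < n,
            (Finset.univ.filter
              (fun r : Fin n => n - (k+1) < (r : ℕ) ∧ g' r ⟨n - (k+1), hjn'⟩ ≠ 0)).card ≤ m := by
          intro hjn'
          have hsub : Finset.univ.filter
              (fun r : Fin n => n - (k+1) < (r : ℕ) ∧ g' r ⟨n - (k+1), hjn'⟩ ≠ 0) ⊆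
              S.erase I := by
            intro r hr
            have hr' := Finset.mem_filter.mp hr
            have hrne : r ≠ I := by
              intro hc
              subst hc
              exact hr'.2.2 (hIeta ▸ hzero)
            refine Finset.mem_erase.mpr ⟨hrne, Finset.mem_filter.mpr
              ⟨Finset.mem_univ _, hr'.2.1, ?_⟩⟩
            have : g' r = g r := hunch r (fun hc => hrne (Fin.ext hc))
            rw [← this]
            exact hr'.2.2
          have h1 := le_trans (Finset.card_le_card hsub) (le_of_eq (Finset.card_erase_of_mem hIS))
          have h3 : S.card ≤ m + 1 := hbad hjn
          have h4 : 0 < S.card := Finset.card_pos.mpr hSne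
          omega
        obtain ⟨L, hLmem, u, huT, hudet, huC, hulow, hglu⟩ :=
          ihm g' hdetne hct' hclean' hbad'
        refine ⟨chevY n ⟨(I : ℕ) - 1, by omega⟩ ⟨(I : ℕ), I.isLt⟩ t :: L, ?_, u, huT, hudet,
          huC, ?_, ?_⟩
        · intro A hA
          rcases List.mem_cons.mp hA with h | h
          · exact ⟨_, _, t, by simp; omega, ht, h⟩
          · exact hLmem A h
        · intro hlowg
          exact hulow (hlow' hlowg)
        · rw [List.prod_cons, mul_assoc, ← hglu]
          exact hfac


/-- the order-reversing bijection of `Fin n` -/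
def revE {n : ℕ} : Fin n ≃ Fin n where
  toFun r := ⟨n - 1 - r.1, by have := r.isLt; omega⟩
  invFun r := ⟨n - 1 - r.1, by have := r.isLt; omega⟩
  left_inv r := Fin.ext (by have := r.isLt; simp; omega)
  right_inv r := Fin.ext (by have := r.isLt; simp; omega)

lemma revE_val (r : Fin n) : ((revE r : Fin n) : ℕ) = n - 1 - (r : ℕ) := rfl

lemma revE_revE (r : Fin n) : revE (revE r) = r := revE.left_inv r

/-- rotation of a matrix by 180 degrees -/
def rho (g : Mat n) : Mat n := g.submatrix (revE (n := n)) (revE (n := n))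

lemma rho_apply (g : Mat n) (r c : Fin n) : rho g r c = g (revE r) (revE c) := rfl

lemma rho_mul (A B : Mat n) : rho (A * B) = rho A * rho B :=
  (submatrix_mul_equiv A B _ revE _).symm

lemma rho_one : rho (1 : Mat n) = 1 := submatrix_one_equiv revE

lemma rho_det (g : Mat n) : (rho g).det = g.det := det_submatrix_equiv_self revE g

lemma rho_list_prod (L : List (Mat n)) : rho L.prod = (L.map rho).prod := by
  induction L with
  | nil => simpa using rho_one
  | cons A L ih => rw [List.prod_cons, rho_mul, ih, List.map_cons, List.prod_cons]

lemma UpperTri.rho_lower {u : Mat n} (h : UpperTri u) : LowerTri (rho u) := by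
  intro r c hrc
  exact h (revE r) (revE c) (by rw [revE_val, revE_val]; have := c.isLt; omega)

lemma CTNN.rho {g : Mat n} (hg : CTNN g) : CTNN (LW.rho g) := by
  intro m a hma f hf
  have hFmono : StrictMono (fun p : Fin m => revE (f (revE p))) := by
    intro p q hpq
    rw [Fin.lt_def, revE_val, revE_val]
    have h1 : (revE q : Fin m) < revE p := by
      rw [Fin.lt_def, revE_val, revE_val]
      rw [Fin.lt_def] at hpq
      have := p.isLt; have := q.isLt
      omega
    have h2 := Fin.lt_def.mp (hf h1)
    have := (f (revE p)).isLt
    omega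
  have h' : n - (a + m) + m ≤ n := by omega
  have hEq : (LW.rho g).submatrix (win a hma) f
      = (g.submatrix (win (n - (a + m)) h') (fun p => revE (f (revE p)))).submatrix
          (revE (n := m)) (revE (n := m)) := by
    ext p q
    simp only [submatrix_apply, rho_apply, revE_revE]
    congr 1
    apply Fin.ext
    rw [revE_val]
    show n - 1 - (a + p.1) = n - (a + m) + (m - 1 - p.1)
    have := p.isLt
    omega
  rw [hEq, det_submatrix_equiv_self revE]
  exact hg m (n - (a + m)) h' _ hFmono

lemma rho_chevY (i j : Fin n) (a : ℝ) :
    rho (chevY n i j a) = chevX n (revE j) (revE i) a := by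
  ext r c
  rw [rho_apply]
  show (1 + Matrix.single j i a) _ _ = (1 + Matrix.single (revE j) (revE i) a) r c
  rw [Matrix.add_apply, Matrix.add_apply]
  congr 1
  · rw [one_apply, one_apply]
    by_cases h : r = c
    · simp [h]
    · rw [if_neg (fun hc => h (by rw [← revE_revE r, ← revE_revE c, hc])), if_neg h]
  · rw [Matrix.single, Matrix.single, of_apply, of_apply]
    by_cases h1 : j = revE r <;> by_cases h2 : i = revE c
    · rw [if_pos ⟨h1, h2⟩, if_pos ⟨by rw [h1, revE_revE], by rw [h2, revE_revE]⟩]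
    · rw [if_neg (fun hc => h2 hc.2), if_neg]
      intro hc
      exact h2 (by rw [← hc.2, revE_revE])
    · rw [if_neg (fun hc => h1 hc.1), if_neg]
      intro hc
      exact h1 (by rw [← hc.1, revE_revE])
    · rw [if_neg (fun hc => h1 hc.1), if_neg]
      intro hc
      exact h1 (by rw [← hc.1, revE_revE])

lemma rho_diagonal (d : Fin n → ℝ) :
    rho (Matrix.diagonal d) = Matrix.diagonal (fun k => d (revE k)) := by
  ext r c
  rw [rho_apply]
  by_cases h : r = c
  · subst h; simp
  · rw [diagonal_apply_ne _ (fun hc => h (by rw [← revE_revE r, ← revE_revE c, hc])),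
      diagonal_apply_ne _ h]



/-- the generator predicate of the theorem -/
def IsGen (n : ℕ) (A : Mat n) : Prop :=
  (∃ (i j : Fin n) (a : ℝ), (j : ℕ) = (i : ℕ) + 1 ∧ 0 < a ∧ A = chevX n i j a) ∨
  (∃ (i j : Fin n) (a : ℝ), (j : ℕ) = (i : ℕ) + 1 ∧ 0 < a ∧ A = chevY n i j a) ∨
  (∃ d : Fin n → ℝ, (∀ i, 0 < d i) ∧ A = Matrix.diagonal d)

lemma tnn_of_list : ∀ L : List (Mat n), (∀ A ∈ L, IsGen n A) → TotallyNonneg L.prod := by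
  intro L
  induction L with
  | nil => intro _; rw [List.prod_nil]; exact tnn_one
  | cons A L ih =>
    intro h
    rw [List.prod_cons]
    have hrest := ih (fun B hB => h B (List.mem_cons_of_mem _ hB))
    rcases h A (List.mem_cons_self) with ⟨i, j, a, hij, ha, rfl⟩ | ⟨i, j, a, hij, ha, rfl⟩ |
      ⟨d, hd, rfl⟩
    · exact tnn_chevX_mul hij (le_of_lt ha) hrest
    · exact tnn_chevY_mul hij (le_of_lt ha) hrest
    · exact tnn_diagonal_mul d (fun k => le_of_lt (hd k)) hrest

lemma forward {g : Mat n} (hdet : g.det ≠ 0) (htnn : TotallyNonneg g) :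
    ∃ L : List (Mat n), (∀ A ∈ L, IsGen n A) ∧ g = L.prod := by
  have hclean0 : ∀ h : Mat n, CleanBelow h (n - n) := by
    intro h r c hc hcr
    omega
  have hbad0 : ∀ (h : Mat n) (hjn : n - n < n),
      (Finset.univ.filter
        (fun r : Fin n => n - n < (r : ℕ) ∧ h r ⟨n - n, hjn⟩ ≠ 0)).card ≤ n := by
    intro h hjn
    calc (Finset.univ.filter _).card ≤ Finset.univ.card := Finset.card_filter_le _ _
    _ = n := by simp
  obtain ⟨Y, hY, u, huT, hudet, huC, -, hgu⟩ :=
    phase1 n n g hdet (tnn_ctnn htnn) (hclean0 g) (hbad0 g)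
  obtain ⟨Y₂, hY₂, u₂, hu₂T, hu₂det, hu₂C, hlow, hvu⟩ :=
    phase1 n n (rho u) (by rw [rho_det]; exact hudet) huC.rho (hclean0 _) (hbad0 _)
  have hL2 : LowerTri u₂ := hlow huT.rho_lower
  set d : Fin n → ℝ := fun k => u₂ k k with hdd
  have hdiag : u₂ = Matrix.diagonal d := by
    ext r c
    by_cases h : r = c
    · subst h; simp [hdd]
    · rw [diagonal_apply_ne _ h]
      rcases lt_or_gt_of_ne (fun hc : (r : ℕ) = (c : ℕ) => h (Fin.ext hc)) with hlt | hgt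
      · exact hL2 r c hlt
      · exact hu₂T r c hgt
  have hdpos : ∀ k, 0 < d k := by
    intro k
    refine lt_of_le_of_ne (hu₂C.entry k k) (fun hk => ?_)
    apply hu₂det
    rw [hdiag, det_diagonal]
    exact Finset.prod_eq_zero (Finset.mem_univ k) hk.symm
  have hrr : rho (rho u) = u := by
    ext r c
    rw [rho_apply, rho_apply, revE_revE, revE_revE]
  have hu : u = (Y₂.map rho).prod * Matrix.diagonal (fun k => d (revE k)) := by
    rw [← hrr, hvu, rho_mul, rho_list_prod, hdiag, rho_diagonal]
  refine ⟨Y ++ (Y₂.map rho ++ [Matrix.diagonal (fun k => d (revE k))]), ?_, ?_⟩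
  · intro A hA
    rcases List.mem_append.mp hA with h | h
    · obtain ⟨i, j, a, hij, ha, rfl⟩ := hY A h
      exact Or.inr (Or.inl ⟨i, j, a, hij, ha, rfl⟩)
    · rcases List.mem_append.mp h with h | h
      · obtain ⟨B, hB, rfl⟩ := List.mem_map.mp h
        obtain ⟨i, j, a, hij, ha, rfl⟩ := hY₂ B hB
        refine Or.inl ⟨revE j, revE i, a, ?_, ha, rho_chevY i j a⟩
        rw [revE_val, revE_val]
        have := j.isLt
        omega
      · rw [List.mem_singleton.mp h]
        exact Or.inr (Or.inr ⟨_, fun k => hdpos _, rfl⟩)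
  · rw [List.prod_append, List.prod_append, List.prod_singleton, hgu, hu]

end LW

/-- Loewner–Whitney theorem: an invertible real matrix is totally nonnegative iff it is
a finite product of positive Chevalley generators and positive diagonal matrices. -/
theorem loewner_whitney {n : ℕ} (g : Matrix (Fin n) (Fin n) ℝ) (hg : IsUnit g.det) :
    TotallyNonneg g ↔
      ∃ L : List (Matrix (Fin n) (Fin n) ℝ),
        (∀ A ∈ L,
          (∃ (i j : Fin n) (a : ℝ), (j : ℕ) = (i : ℕ) + 1 ∧ 0 < a ∧ A = chevX n i j a) ∨
          (∃ (i j : Fin n) (a : ℝ), (j : ℕ) = (i : ℕ) + 1 ∧ 0 < a ∧ A = chevY n i j a) ∨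
          (∃ d : Fin n → ℝ, (∀ i, 0 < d i) ∧ A = Matrix.diagonal d)) ∧
        g = L.prod := by
  constructor
  · intro htnn
    exact LW.forward hg.ne_zero htnn
  · rintro ⟨L, hL, rfl⟩
    exact LW.tnn_of_list L hL
end

section
/- One-swap Plücker relations (necessity): Let M be a k×n matrix over a commutative ring, and let i_1,…,i_{k−1} and j_1,…,j_{k+1} be elements of {1,…,n}. Then ∑_{s=1}^{k+1} (−1)^s · Δ_{(i_1,…,i_{k−1},j_s)}(M) · Δ_{(j_1,…,ĵ_s,…,j_{k+1})}(M) = 0, where ĵ_s denotes omission of the index j_s from the tuple (j_1,…,j_{k+1}). -/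
/-- One-swap Plücker relations (necessity): for a `(m+1) × n` matrix over a commutative
ring, a tuple `i : Fin m → Fin n` and a tuple `j : Fin (m+2) → Fin n`,
`∑_{s} (-1)^{s+1} Δ_{(i₁,…,i_m,j_s)}(M) Δ_{(j₁,…,ĵ_s,…,j_{m+2})}(M) = 0`,
where `Δ_c(M)` is the determinant of the square matrix whose `r`-th column is column
`c r` of `M`. -/
theorem plucker_one_swap {R : Type*} [CommRing R] {m n : ℕ}
    (M : Matrix (Fin (m + 1)) (Fin n) R)
    (i : Fin m → Fin n) (j : Fin (m + 2) → Fin n) :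
    ∑ s : Fin (m + 2),
        (-1 : R) ^ ((s : ℕ) + 1) *
          ((M.submatrix id (Fin.snoc i (j s))).det *
            (M.submatrix id (fun r => j (s.succAbove r))).det) = 0 := by
  -- Key: for each row `r`, the Laplace expansion of the (m+2)×(m+2) matrix whose
  -- first row is row `r` of `M∘j` and whose remaining rows are the rows of `M∘j`
  -- vanishes (repeated row).
  have key : ∀ r : Fin (m + 1),
      ∑ s : Fin (m + 2), (-1 : R) ^ (s : ℕ) * M r (j s) *
        (M.submatrix id (fun t => j (s.succAbove t))).det = 0 := by
    intro r
    have h0 : (Matrix.of (Fin.cons (fun s => M r (j s)) (fun t s => M t (j s))) :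
        Matrix (Fin (m + 2)) (Fin (m + 2)) R).det = 0 := by
      apply Matrix.det_zero_of_row_eq (i := 0) (j := r.succ) (Fin.succ_ne_zero r).symm
      funext s
      simp
    rw [Matrix.det_succ_row_zero] at h0
    have hsub : ∀ s : Fin (m + 2),
        ((Matrix.of (Fin.cons (fun s => M r (j s)) (fun t s => M t (j s))) :
          Matrix (Fin (m + 2)) (Fin (m + 2)) R).submatrix Fin.succ s.succAbove)
          = M.submatrix id (fun t => j (s.succAbove t)) := by
      intro s
      ext a b
      simp [Matrix.submatrix]
    simp only [hsub, Matrix.of_apply, Fin.cons_zero] at h0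
    exact h0
  -- Expansion of `Δ_{(i, j_s)}` along the last column; cofactors don't depend on `s`.
  have expand : ∀ s : Fin (m + 2),
      (M.submatrix id (Fin.snoc i (j s))).det
        = ∑ r : Fin (m + 1), (-1 : R) ^ ((r : ℕ) + m) * M r (j s) *
            (M.submatrix (Fin.succAbove r) i).det := by
    intro s
    rw [Matrix.det_succ_column (M.submatrix id (Fin.snoc i (j s))) (Fin.last m)]
    refine Finset.sum_congr rfl fun r _ => ?_
    congr 2
    · simp
    · ext a b
      simp [Fin.succAbove_last, Matrix.submatrix]
  calc
    ∑ s : Fin (m + 2),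
        (-1 : R) ^ ((s : ℕ) + 1) *
          ((M.submatrix id (Fin.snoc i (j s))).det *
            (M.submatrix id (fun r => j (s.succAbove r))).det)
      = ∑ s : Fin (m + 2), ∑ r : Fin (m + 1),
          ((-1 : R) ^ ((r : ℕ) + m + 1) * (M.submatrix (Fin.succAbove r) i).det) *
            ((-1 : R) ^ (s : ℕ) * M r (j s) *
              (M.submatrix id (fun t => j (s.succAbove t))).det) := by
        refine Finset.sum_congr rfl fun s _ => ?_
        rw [expand s, Finset.sum_mul, Finset.mul_sum]
        refine Finset.sum_congr rfl fun r _ => ?_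
        ring
    _ = 0 := by
        rw [Finset.sum_comm]
        refine Finset.sum_eq_zero fun r _ => ?_
        rw [← Finset.mul_sum, key r, mul_zero]
end

section
/- One-swap Plücker relations suffice to define a point of the Grassmannian: Let 1 ≤ k ≤ n and let Δ : {1,…,n}^k → ℂ be a function that is alternating (Δ(c∘σ) = sign(σ)·Δ(c) for every permutation σ of {1,…,k}, and Δ(c) = 0 whenever the tuple c has a repeated entry), is not identically zero, and satisfies the one-swap Plücker relations: for all i_1,…,i_{k−1} and j_1,…,j_{k+1} in {1,…,n}, ∑_{s=1}^{k+1} (−1)^s · Δ(i_1,…,i_{k−1},j_s) · Δ(j_1,…,ĵ_s,…,j_{k+1}) = 0 (ĵ_s denoting omission). Then there exists a k×n complex matrix M, necessarily of rank k, such that Δ(c) equals the determinant of the k×k matrix whose r-th column is column c_r of M, for every tuple c ∈ {1,…,n}^k. -/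
open Matrix Finset

namespace PluckerAux

variable {m n : ℕ}

/-- determinant is additive-in-a-column over finite sums of arbitrary vectors -/
lemma det_updateCol_sum' {ι : Type*} (s : Finset ι)
    (A : Matrix (Fin (m + 1)) (Fin (m + 1)) ℂ) (j : Fin (m + 1)) (v : ι → Fin (m + 1) → ℂ) :
    (A.updateCol j (∑ i ∈ s, v i)).det = ∑ i ∈ s, (A.updateCol j (v i)).det := by
  induction s using Finset.cons_induction with
  | empty =>
      simp only [Finset.sum_empty]
      exact Matrix.det_eq_zero_of_column_eq_zero j (fun i => by simp)
  | cons a s ha ih =>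
      rw [Finset.sum_cons, Finset.sum_cons, Matrix.det_updateCol_add, ih]

/-- each coordinate of the "Cramer style" vector vanishes -/
lemma row_rel (M : Matrix (Fin (m + 1)) (Fin n) ℂ) (j : Fin (m + 2) → Fin n) (t : Fin (m + 1)) :
    ∑ s : Fin (m + 2), (-1 : ℂ) ^ (s : ℕ) * M t (j s) *
      (M.submatrix id (fun r => j (s.succAbove r))).det = 0 := by
  set B : Matrix (Fin (m + 2)) (Fin (m + 2)) ℂ :=
    Matrix.of (Fin.cons (fun s => M t (j s)) (fun r s => M r (j s))) with hB
  have h0 : B.det = 0 := by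
    apply Matrix.det_zero_of_row_eq (i := 0) (j := t.succ) (Fin.succ_ne_zero t).symm
    funext s
    simp [hB]
  have h1 := Matrix.det_succ_row_zero B
  rw [h0] at h1
  have h2 : ∀ s : Fin (m + 2), B.submatrix Fin.succ s.succAbove
      = M.submatrix id (fun r => j (s.succAbove r)) := by
    intro s; ext r p; simp [hB]
  calc ∑ s : Fin (m + 2), (-1 : ℂ) ^ (s : ℕ) * M t (j s) *
        (M.submatrix id (fun r => j (s.succAbove r))).det
      = ∑ s : Fin (m + 2), (-1 : ℂ) ^ (s : ℕ) * B 0 s *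
        (B.submatrix Fin.succ s.succAbove).det := by
        refine Finset.sum_congr rfl fun s _ => ?_
        rw [h2]
        simp [hB]
    _ = 0 := h1.symm

/-- the one-swap Plücker relation holds for the maximal minors of any matrix -/
lemma minor_plucker (M : Matrix (Fin (m + 1)) (Fin n) ℂ) (i : Fin m → Fin n)
    (j : Fin (m + 2) → Fin n) :
    ∑ s : Fin (m + 2), (-1 : ℂ) ^ ((s : ℕ) + 1) *
      ((M.submatrix id (Fin.snoc i (j s))).det *
        (M.submatrix id (fun r => j (s.succAbove r))).det) = 0 := by
  set A : Matrix (Fin (m + 1)) (Fin (m + 1)) ℂ := M.submatrix id (Fin.snoc i (j 0)) with hA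
  have hup : ∀ x : Fin n, M.submatrix id (Fin.snoc i x)
      = A.updateCol (Fin.last m) (fun r => M r x) := by
    intro x; ext r p
    refine Fin.lastCases ?_ ?_ p
    · simp [hA, Matrix.updateCol_self]
    · intro q
      simp [hA, Matrix.updateCol_ne (Fin.castSucc_lt_last q).ne]
  have key : ∀ s : Fin (m + 2), (-1 : ℂ) ^ ((s : ℕ) + 1) *
      ((M.submatrix id (Fin.snoc i (j s))).det *
        (M.submatrix id (fun r => j (s.succAbove r))).det)
      = (A.updateCol (Fin.last m)
          (((-1 : ℂ) ^ ((s : ℕ) + 1) *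
            (M.submatrix id (fun r => j (s.succAbove r))).det) • fun r => M r (j s))).det := by
    intro s
    rw [Matrix.det_updateCol_smul, ← hup]
    ring
  rw [Finset.sum_congr rfl (fun s _ => key s), ← det_updateCol_sum']
  have hz : (∑ s : Fin (m + 2),
      ((-1 : ℂ) ^ ((s : ℕ) + 1) *
        (M.submatrix id (fun r => j (s.succAbove r))).det) • fun r => M r (j s)) = 0 := by
    funext r
    have := row_rel M j r
    simp only [Finset.sum_apply, Pi.smul_apply, smul_eq_mul, Pi.zero_apply]
    calc ∑ s : Fin (m + 2), ((-1 : ℂ) ^ ((s : ℕ) + 1) *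
          (M.submatrix id (fun r => j (s.succAbove r))).det) * M r (j s)
        = -∑ s : Fin (m + 2), (-1 : ℂ) ^ (s : ℕ) * M r (j s) *
          (M.submatrix id (fun r => j (s.succAbove r))).det := by
          rw [← Finset.sum_neg_distrib]
          refine Finset.sum_congr rfl fun s _ => ?_
          ring
      _ = 0 := by rw [this, neg_zero]
  rw [hz]
  exact Matrix.det_eq_zero_of_column_eq_zero (Fin.last m) (fun i => by simp)

lemma key_identity (F : (Fin (m + 1) → Fin n) → ℂ)
    (halt : ∀ (c : Fin (m + 1) → Fin n) (σ : Equiv.Perm (Fin (m + 1))),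
      F (c ∘ σ) = ((Equiv.Perm.sign σ : ℤ) : ℂ) * F c)
    (hpl : ∀ (i : Fin m → Fin n) (j : Fin (m + 2) → Fin n),
      ∑ s : Fin (m + 2), (-1 : ℂ) ^ ((s : ℕ) + 1) *
        (F (Fin.snoc i (j s)) * F (fun r => j (s.succAbove r))) = 0)
    (c₀ : Fin (m + 1) → Fin n) (h1 : F c₀ = 1) (c : Fin (m + 1) → Fin n) :
    F c = ∑ t : Fin (m + 1),
      F (Fin.snoc (Fin.init c) (c₀ t)) * F (Function.update c₀ t (c (Fin.last m))) := by
  set x := c (Fin.last m) with hx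
  have h := hpl (Fin.init c) (Fin.cons x c₀)
  rw [Fin.sum_univ_succ] at h
  have hterm : ∀ t : Fin (m + 1),
      F (fun r => (Fin.cons x c₀ : Fin (m + 2) → Fin n) ((t.succ).succAbove r))
        = ((-1 : ℂ) ^ (t : ℕ)) * F (Function.update c₀ t x) := by
    intro t
    have hc : (fun r => (Fin.cons x c₀ : Fin (m + 2) → Fin n) ((t.succ).succAbove r))
        ∘ (t.cycleRange) = Function.update c₀ t x := by
      funext r
      simp only [Function.comp_apply, Fin.succAbove_cycleRange]
      rcases eq_or_ne r t with h | h
      · subst h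
        rw [Equiv.swap_apply_right]
        simp
      · rw [Equiv.swap_apply_of_ne_of_ne (Fin.succ_ne_zero r)
          (fun hh => h (Fin.succ_injective _ hh))]
        simp [Function.update_of_ne h]
    have h2 := halt (fun r => (Fin.cons x c₀ : Fin (m + 2) → Fin n) ((t.succ).succAbove r))
      t.cycleRange
    rw [hc, Fin.sign_cycleRange] at h2
    have hsq : ((-1 : ℂ) ^ (t : ℕ)) * ((-1 : ℂ) ^ (t : ℕ)) = 1 := by
      rw [← pow_add]
      exact Even.neg_one_pow ⟨(t : ℕ), rfl⟩
    have h2' : F (Function.update c₀ t x)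
        = ((-1 : ℂ) ^ (t : ℕ)) *
          F (fun r => (Fin.cons x c₀ : Fin (m + 2) → Fin n) ((t.succ).succAbove r)) := by
      rw [h2]; push_cast; ring
    rw [h2']
    rw [← mul_assoc, hsq, one_mul]
  have h0term : (Fin.snoc (Fin.init c) ((Fin.cons x c₀ : Fin (m + 2) → Fin n) 0)) = c := by
    simp [Fin.snoc_init_self, hx]
  have hsucc : ∀ r : Fin (m + 1),
      (Fin.cons x c₀ : Fin (m + 2) → Fin n) ((0 : Fin (m + 2)).succAbove r) = c₀ r := by
    intro r; simp [Fin.succAbove]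
  have h' : -(F c * F c₀) + ∑ t : Fin (m + 1),
      F (Fin.snoc (Fin.init c) (c₀ t)) * F (Function.update c₀ t x) = 0 := by
    calc -(F c * F c₀) + ∑ t : Fin (m + 1),
          F (Fin.snoc (Fin.init c) (c₀ t)) * F (Function.update c₀ t x)
        = (-1 : ℂ) ^ (((0 : Fin (m + 2)) : ℕ) + 1) *
            (F (Fin.snoc (Fin.init c) ((Fin.cons x c₀ : Fin (m + 2) → Fin n) 0)) *
              F (fun r => (Fin.cons x c₀ : Fin (m + 2) → Fin n) ((0 : Fin (m + 2)).succAbove r)))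
          + ∑ t : Fin (m + 1), (-1 : ℂ) ^ (((t.succ : Fin (m + 2)) : ℕ) + 1) *
            (F (Fin.snoc (Fin.init c) ((Fin.cons x c₀ : Fin (m + 2) → Fin n) t.succ)) *
              F (fun r => (Fin.cons x c₀ : Fin (m + 2) → Fin n) ((t.succ).succAbove r))) := by
          congr 1
          · rw [h0term]
            rw [funext hsucc]
            simp
          · refine (Finset.sum_congr rfl fun t _ => ?_).symm
            rw [hterm t, Fin.cons_succ]
            have : ((t.succ : Fin (m + 2)) : ℕ) = (t : ℕ) + 1 := rfl
            rw [this]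
            have hsq : ((-1 : ℂ) ^ ((t : ℕ) + 1 + 1)) * ((-1 : ℂ) ^ (t : ℕ)) = 1 := by
              rw [← pow_add]
              exact Even.neg_one_pow ⟨(t : ℕ) + 1, by ring⟩
            linear_combination
              (F (Fin.snoc (Fin.init c) (c₀ t)) * F (Function.update c₀ t x)) * hsq
      _ = 0 := h
  rw [h1, mul_one] at h'
  linear_combination -h'


lemma main_core (Δ : (Fin (m + 1) → Fin n) → ℂ)
    (halt : ∀ (c : Fin (m + 1) → Fin n) (σ : Equiv.Perm (Fin (m + 1))),
      Δ (c ∘ σ) = ((Equiv.Perm.sign σ : ℤ) : ℂ) * Δ c)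
    (hrep : ∀ c : Fin (m + 1) → Fin n, (∃ r s, r ≠ s ∧ c r = c s) → Δ c = 0)
    (hpl : ∀ (i : Fin m → Fin n) (j : Fin (m + 2) → Fin n),
      ∑ s : Fin (m + 2), (-1 : ℂ) ^ ((s : ℕ) + 1) *
        (Δ (Fin.snoc i (j s)) * Δ (fun r => j (s.succAbove r))) = 0)
    (c₀ : Fin (m + 1) → Fin n) (h1 : Δ c₀ = 1) :
    ∀ c, Δ c = (((Matrix.of fun (r : Fin (m + 1)) (x : Fin n) =>
      Δ (Function.update c₀ r x)) : Matrix (Fin (m + 1)) (Fin n) ℂ).submatrix id c).det := by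
  set M : Matrix (Fin (m + 1)) (Fin n) ℂ :=
    Matrix.of fun (r : Fin (m + 1)) (x : Fin n) => Δ (Function.update c₀ r x) with hM
  set D : (Fin (m + 1) → Fin n) → ℂ := fun c => (M.submatrix id c).det with hD
  show ∀ c, Δ c = D c
  have hMc₀ : ∀ r s, M r (c₀ s) = if r = s then 1 else 0 := by
    intro r s
    by_cases h : r = s
    · subst h
      simp [hM, Function.update_eq_self, h1]
    · rw [if_neg h]
      refine hrep _ ⟨r, s, h, ?_⟩
      rw [Function.update_self, Function.update_of_ne (Ne.symm h)]
  have hDup : ∀ (t : Fin (m + 1)) (x : Fin n), D (Function.update c₀ t x) = M t x := by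
    intro t x
    have hsub : M.submatrix id (Function.update c₀ t x)
        = (1 : Matrix (Fin (m + 1)) (Fin (m + 1)) ℂ).updateCol t (fun r => M r x) := by
      ext r p
      by_cases hp : p = t
      · subst hp
        simp [Matrix.updateCol_self]
      · rw [Matrix.updateCol_ne hp]
        simp only [Matrix.submatrix_apply, id_eq, Function.update_of_ne hp]
        rw [hMc₀ r p, Matrix.one_apply]
    simp only [hD]
    rw [hsub, ← Matrix.cramer_apply, Matrix.cramer_one]
    rfl
  have hDalt : ∀ (c : Fin (m + 1) → Fin n) (σ : Equiv.Perm (Fin (m + 1))),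
      D (c ∘ σ) = ((Equiv.Perm.sign σ : ℤ) : ℂ) * D c := by
    intro c σ
    have : M.submatrix id (c ∘ σ) = (M.submatrix id c).submatrix id σ := rfl
    simp only [hD]
    rw [this, Matrix.det_permute']
  have hD1 : D c₀ = 1 := by
    have : M.submatrix id c₀ = 1 := by
      ext r p
      rw [Matrix.submatrix_apply, id_eq, hMc₀ r p, Matrix.one_apply]
    simp only [hD]
    rw [this, Matrix.det_one]
  have hDpl := fun i j => minor_plucker M i j
  have kΔ := key_identity Δ halt hpl c₀ h1
  have kD := key_identity D hDalt hDpl c₀ hD1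
  -- the matching of the "update" factors, by definition of M
  have hmatch : ∀ (t : Fin (m + 1)) (x : Fin n),
      Δ (Function.update c₀ t x) = D (Function.update c₀ t x) := by
    intro t x
    rw [hDup t x]
    rfl
  have main : ∀ N : ℕ, ∀ c : Fin (m + 1) → Fin n,
      (univ.filter fun r => ∀ s, c r ≠ c₀ s).card = N → Δ c = D c := by
    intro N
    induction N using Nat.strong_induction_on with
    | _ N ih =>
    intro c hN
    by_cases hbad : ∃ r, ∀ s, c r ≠ c₀ s
    · obtain ⟨r, hr⟩ := hbad
      set τ : Equiv.Perm (Fin (m + 1)) := Equiv.swap r (Fin.last m) with hτ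
      set c' : Fin (m + 1) → Fin n := c ∘ τ with hc'
      have hlast : ∀ s, c' (Fin.last m) ≠ c₀ s := by
        intro s
        have : c' (Fin.last m) = c r := by
          simp [hc', hτ, Equiv.swap_apply_right]
        rw [this]; exact hr s
      have hbadc' : (univ.filter fun p => ∀ s, c' p ≠ c₀ s).card = N := by
        rw [← hN]
        apply Finset.card_bij (fun p _ => τ p)
        · intro p hp
          simp only [Finset.mem_filter, Finset.mem_univ, true_and] at hp ⊢
          exact hp
        · intro p hp q hq hpq
          exact τ.injective hpq
        · intro p hp
          refine ⟨τ p, ?_, by simp [hτ, Equiv.swap_apply_self]⟩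
          simp only [Finset.mem_filter, Finset.mem_univ, true_and] at hp ⊢
          intro s
          have : c' (τ p) = c p := by
            simp [hc', hτ, Equiv.swap_apply_self]
          rw [this]; exact hp s
      have hNpos : 0 < N := by
        rw [← hN]
        apply Finset.card_pos.mpr
        exact ⟨r, Finset.mem_filter.mpr ⟨Finset.mem_univ r, hr⟩⟩
      have hΔD' : Δ c' = D c' := by
        rw [kΔ c', kD c']
        refine Finset.sum_congr rfl fun t _ => ?_
        have h3 : Δ (Fin.snoc (Fin.init c') (c₀ t)) = D (Fin.snoc (Fin.init c') (c₀ t)) := by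
          set c'' : Fin (m + 1) → Fin n := Fin.snoc (Fin.init c') (c₀ t) with hc''
          have hsubs : (univ.filter fun p => ∀ s, c'' p ≠ c₀ s)
              ⊂ (univ.filter fun p => ∀ s, c' p ≠ c₀ s) := by
            constructor
            · intro p hp
              simp only [Finset.mem_filter, Finset.mem_univ, true_and] at hp ⊢
              have hpne : p ≠ Fin.last m := by
                intro hpl
                apply hp t
                rw [hpl, hc'']
                simp
              obtain ⟨q, rfl⟩ := Fin.exists_castSucc_eq.mpr hpne
              intro s
              have : c'' q.castSucc = c' q.castSucc := by
                rw [hc'']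
                simp [Fin.init]
              rw [← this]; exact hp s
            · intro hsub
              have hmem := hsub (Finset.mem_filter.mpr ⟨Finset.mem_univ _, hlast⟩)
              simp only [Finset.mem_filter, Finset.mem_univ, true_and] at hmem
              apply hmem t
              rw [hc'']
              simp
          have hlt : (univ.filter fun p => ∀ s, c'' p ≠ c₀ s).card < N := by
            rw [← hbadc']
            exact Finset.card_lt_card hsubs
          exact ih _ hlt c'' rfl
        rw [h3, hmatch]
      have hsgn : (((Equiv.Perm.sign τ : ℤ) : ℂ)) * (((Equiv.Perm.sign τ : ℤ) : ℂ)) = 1 := by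
        have hu := Int.units_mul_self (Equiv.Perm.sign τ)
        have h2 : ((Equiv.Perm.sign τ : ℤ)) * ((Equiv.Perm.sign τ : ℤ)) = 1 := by
          rw [← Units.val_mul, hu]; rfl
        exact_mod_cast h2
      have e1 := halt c τ
      have e2 := hDalt c τ
      rw [← hc'] at e1 e2
      calc Δ c = (((Equiv.Perm.sign τ : ℤ) : ℂ)) * (((Equiv.Perm.sign τ : ℤ) : ℂ)) * Δ c := by
            rw [hsgn, one_mul]
        _ = (((Equiv.Perm.sign τ : ℤ) : ℂ)) * Δ c' := by rw [e1]; ring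
        _ = (((Equiv.Perm.sign τ : ℤ) : ℂ)) * D c' := by rw [hΔD']
        _ = (((Equiv.Perm.sign τ : ℤ) : ℂ)) * (((Equiv.Perm.sign τ : ℤ) : ℂ)) * D c := by
            rw [e2]; ring
        _ = D c := by rw [hsgn, one_mul]
    · push_neg at hbad
      by_cases hinj : Function.Injective c
      · choose g hg using hbad
        have hginj : Function.Injective g := by
          intro a b hab
          apply hinj
          rw [hg a, hg b, hab]
        let σ : Equiv.Perm (Fin (m + 1)) :=
          Equiv.ofBijective g (Finite.injective_iff_bijective.mp hginj)
        have hcσ : c = c₀ ∘ σ := funext fun p => by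
          rw [hg p]; rfl
        rw [hcσ, halt c₀ σ, hDalt c₀ σ, h1, hD1]
      · rw [Function.not_injective_iff] at hinj
        obtain ⟨a, b, hcab, hab⟩ := hinj
        rw [hrep c ⟨a, b, hab, hcab⟩]
        refine (Matrix.det_zero_of_column_eq hab fun k => ?_).symm
        simp [hcab]
  intro c
  exact main _ c rfl


end PluckerAux


/-- One-swap Plücker relations suffice to define a point of the Grassmannian:
an alternating, not identically zero function `Δ` on `k`-tuples (`k = m+1`) of column
indices satisfying the one-swap Plücker relations is the collection of maximal minors
of some `k × n` complex matrix, necessarily of rank `k`. -/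
theorem plucker_relations_realizable {m n : ℕ} (hkn : m + 1 ≤ n)
    (Δ : (Fin (m + 1) → Fin n) → ℂ)
    (halt : ∀ (c : Fin (m + 1) → Fin n) (σ : Equiv.Perm (Fin (m + 1))),
      Δ (c ∘ σ) = ((Equiv.Perm.sign σ : ℤ) : ℂ) * Δ c)
    (hrep : ∀ c : Fin (m + 1) → Fin n, (∃ r s, r ≠ s ∧ c r = c s) → Δ c = 0)
    (hne : ∃ c, Δ c ≠ 0)
    (hpl : ∀ (i : Fin m → Fin n) (j : Fin (m + 2) → Fin n),
      ∑ s : Fin (m + 2),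
          (-1 : ℂ) ^ ((s : ℕ) + 1) *
            (Δ (Fin.snoc i (j s)) * Δ (fun r => j (s.succAbove r))) = 0) :
    ∃ M : Matrix (Fin (m + 1)) (Fin n) ℂ, M.rank = m + 1 ∧
      ∀ c : Fin (m + 1) → Fin n, Δ c = (M.submatrix id c).det := by
  obtain ⟨c₀, hc₀⟩ := hne
  set Δ' : (Fin (m + 1) → Fin n) → ℂ := fun c => (Δ c₀)⁻¹ * Δ c with hΔ'
  have halt' : ∀ (c : Fin (m + 1) → Fin n) (σ : Equiv.Perm (Fin (m + 1))),
      Δ' (c ∘ σ) = ((Equiv.Perm.sign σ : ℤ) : ℂ) * Δ' c := by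
    intro c σ
    simp only [hΔ']
    rw [halt c σ]
    ring
  have hrep' : ∀ c : Fin (m + 1) → Fin n, (∃ r s, r ≠ s ∧ c r = c s) → Δ' c = 0 := by
    intro c hc
    simp only [hΔ', hrep c hc, mul_zero]
  have hpl' : ∀ (i : Fin m → Fin n) (j : Fin (m + 2) → Fin n),
      ∑ s : Fin (m + 2), (-1 : ℂ) ^ ((s : ℕ) + 1) *
        (Δ' (Fin.snoc i (j s)) * Δ' (fun r => j (s.succAbove r))) = 0 := by
    intro i j
    have : ∀ s : Fin (m + 2), (-1 : ℂ) ^ ((s : ℕ) + 1) *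
        (Δ' (Fin.snoc i (j s)) * Δ' (fun r => j (s.succAbove r)))
        = (Δ c₀)⁻¹ * (Δ c₀)⁻¹ * ((-1 : ℂ) ^ ((s : ℕ) + 1) *
          (Δ (Fin.snoc i (j s)) * Δ (fun r => j (s.succAbove r)))) := by
      intro s
      simp only [hΔ']
      ring
    rw [Finset.sum_congr rfl (fun s _ => this s), ← Finset.mul_sum, hpl i j, mul_zero]
  have h1' : Δ' c₀ = 1 := inv_mul_cancel₀ hc₀
  have hM' := PluckerAux.main_core Δ' halt' hrep' hpl' c₀ h1'
  set M' : Matrix (Fin (m + 1)) (Fin n) ℂ :=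
    Matrix.of fun (r : Fin (m + 1)) (x : Fin n) => Δ' (Function.update c₀ r x) with hMdef
  set M : Matrix (Fin (m + 1)) (Fin n) ℂ :=
    M'.updateRow 0 (fun x => Δ c₀ * M' 0 x) with hMdef2
  have key : ∀ c : Fin (m + 1) → Fin n,
      (M.submatrix id c).det = Δ c₀ * (M'.submatrix id c).det := by
    intro c
    have hsub : M.submatrix id c
        = (M'.submatrix id c).updateRow 0 ((Δ c₀) • (M'.submatrix id c) 0) := by
      ext r p
      by_cases hr : r = 0
      · subst hr
        simp [hMdef2, Matrix.updateRow_self]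
      · simp [hMdef2, Matrix.updateRow_ne hr]
    rw [hsub, Matrix.det_updateRow_smul, Matrix.updateRow_eq_self]
  have hΔM : ∀ c : Fin (m + 1) → Fin n, Δ c = (M.submatrix id c).det := by
    intro c
    rw [key c, ← hM' c]
    simp only [hΔ']
    field_simp
  refine ⟨M, ?_, hΔM⟩
  have hunit : IsUnit (M.submatrix id c₀) := by
    rw [Matrix.isUnit_iff_isUnit_det]
    exact isUnit_iff_ne_zero.mpr (by rw [← hΔM c₀]; exact hc₀)
  set P : Matrix (Fin n) (Fin (m + 1)) ℂ :=
    Matrix.of fun (x : Fin n) (s : Fin (m + 1)) => if x = c₀ s then (1 : ℂ) else 0 with hP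
  have hMP : M * P = M.submatrix id c₀ := by
    ext r s
    rw [Matrix.mul_apply]
    simp [hP, mul_ite, Finset.sum_ite_eq']
  refine le_antisymm ?_ ?_
  · calc M.rank ≤ Fintype.card (Fin (m + 1)) := Matrix.rank_le_card_height M
      _ = m + 1 := Fintype.card_fin _
  · calc m + 1 = (M.submatrix id c₀).rank := by
          rw [Matrix.rank_of_isUnit _ hunit, Fintype.card_fin]
      _ = (M * P).rank := by rw [hMP]
      _ ≤ M.rank := Matrix.rank_mul_le_left M P
end

section
/- Cyclic symmetry of the totally nonnegative Grassmannian: let X be a k×n real matrix with columns v_1,…,v_n, and let χ(X) be the k×n matrix with columns ((−1)^{k−1}·v_n, v_1, v_2, …, v_{n−1}). If Δ_I(X) ≥ 0 for every k-element subset I of {1,…,n}, then Δ_I(χ(X)) ≥ 0 for every k-element subset I; if Δ_I(X) > 0 for every I, then Δ_I(χ(X)) > 0 for every I. Moreover χ^n(X) = (−1)^{k−1}·X, so χ induces an action of the cyclic group ℤ/nℤ on Gr(k,n)_{≥0} and on Gr(k,n)_{>0}. -/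
lemma fin_sub_one_val {n : ℕ} [NeZero n] (p : Fin n) :
    (p - 1).val = if p.val = 0 then n - 1 else p.val - 1 := by
  have hn := Nat.pos_of_ne_zero (NeZero.ne n)
  rw [Fin.sub_def]
  rcases Nat.eq_or_lt_of_le hn with h1 | h1
  · have : n = 1 := h1.symm
    subst this
    simp
  · have h1' : (1 : Fin n).val = 1 := by
      simp [Fin.val_one', Nat.mod_eq_of_lt h1]
    rw [h1']
    by_cases hp : p.val = 0
    · simp [hp, Nat.mod_eq_of_lt (by omega : n - 1 < n)]
    · have : n - 1 + p.val = (p.val - 1) + n := by omega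
      simp only []
      rw [this, Nat.add_mod_right, Nat.mod_eq_of_lt (by omega : p.val - 1 < n)]
      simp [hp]




/-- The Plücker coordinate `Δ_I(M)`: the determinant of the `k × k` submatrix of the
`k × n` matrix `M` on the columns of `I` in increasing order (and `0` if `I` does not
have exactly `k` elements). -/
noncomputable def plk {k n : ℕ} (M : Matrix (Fin k) (Fin n) ℝ) (I : Finset (Fin n)) : ℝ :=
  if h : I.card = k then (M.submatrix id (fun r => I.orderEmbOfFin h r)).det else 0

/-- The cyclic shift `χ` on `k × n` matrices: the columns `(v_1, …, v_n)` are replaced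
by `((-1)^{k-1} v_n, v_1, …, v_{n-1})`. -/
def chiMat {k n : ℕ} [NeZero n] (X : Matrix (Fin k) (Fin n) ℝ) :
    Matrix (Fin k) (Fin n) ℝ :=
  Matrix.of fun r p => if p = 0 then (-1 : ℝ) ^ (k - 1) * X r (p - 1) else X r (p - 1)

lemma plk_chiMat {k n : ℕ} [NeZero n] (X : Matrix (Fin k) (Fin n) ℝ)
    (I : Finset (Fin n)) (h : I.card = k) :
    plk (chiMat X) I = plk X (I.map (Equiv.subRight (1 : Fin n)).toEmbedding) := by
  set J := I.map (Equiv.subRight (1 : Fin n)).toEmbedding with hJdef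
  have hJ : J.card = k := by rw [Finset.card_map, h]
  have memJ : ∀ x ∈ I, x - 1 ∈ J := by
    intro x hx
    have : (Equiv.subRight (1 : Fin n)).toEmbedding x ∈ J := Finset.mem_map_of_mem _ hx
    simpa [Equiv.subRight] using this
  unfold plk
  rw [dif_pos h, dif_pos hJ]
  set e := I.orderEmbOfFin h with he
  set eJ := J.orderEmbOfFin hJ with heJ'
  by_cases h0 : (0 : Fin n) ∈ I
  · -- case 0 ∈ I
    have hk : 0 < k := h ▸ Finset.card_pos.mpr ⟨0, h0⟩
    obtain ⟨m, rfl⟩ : ∃ m, k = m + 1 := ⟨k - 1, by omega⟩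
    have e0 : e 0 = 0 := by
      have := Finset.orderEmbOfFin_zero h hk
      have hm : I.min' (Finset.card_pos.mp (h.symm ▸ hk)) = 0 :=
        le_antisymm (Finset.min'_le I 0 h0) (Fin.zero_le _)
      rw [← he] at this
      simpa [hm] using this
    have hene : ∀ j : Fin (m + 1), j ≠ 0 → e j ≠ 0 := by
      intro j hj hc
      exact hj (e.injective (hc.trans e0.symm))
    have hval : ∀ j : Fin (m + 1), j ≠ 0 → 1 ≤ (e j).val ∧ (e j).val < n := by
      intro j hj
      refine ⟨?_, (e j).isLt⟩
      have := hene j hj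
      have : (e j).val ≠ 0 := fun hc => this (Fin.ext hc)
      omega
    -- the order embedding of J
    have hmono : StrictMono (fun r : Fin (m + 1) => e (r + 1) - 1) := by
      intro a b hab
      have hb : b.val ≤ m := by omega
      have ha1 : (a + 1).val = a.val + 1 := by
        rw [Fin.val_add_one_of_lt]
        exact Fin.lt_def.mpr (by simp [Fin.last]; omega)
      have hane : a + 1 ≠ 0 := by
        intro hc
        have := congrArg Fin.val hc
        simp [ha1] at this
      have hva := hval _ hane
      rw [Fin.lt_def, fin_sub_one_val, fin_sub_one_val]
      by_cases hbm : b.val = m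
      · have hb1 : b + 1 = 0 := by
          apply Fin.ext
          rw [Fin.val_add_one]
          simp [Fin.last, Fin.ext_iff, hbm]
        rw [hb1, e0]
        split_ifs <;> simp_all <;> have h1 := ((I.orderEmbOfFin h) (a + 1)).isLt <;> have h2 := hval _ hane <;> omega
      · have hb1 : (b + 1).val = b.val + 1 := by
          rw [Fin.val_add_one_of_lt]
          exact Fin.lt_def.mpr (by simp [Fin.last]; omega)
        have hbne : b + 1 ≠ 0 := by
          intro hc
          have := congrArg Fin.val hc
          simp [hb1] at this
        have hvb := hval _ hbne
        have hlt : e (a + 1) < e (b + 1) := by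
          apply e.strictMono
          rw [Fin.lt_def, ha1, hb1]
          omega
        rw [Fin.lt_def] at hlt
        rw [if_neg (by omega), if_neg (by omega)]
        omega
    have hfeq : (fun r : Fin (m + 1) => e (r + 1) - 1) = eJ :=
      Finset.orderEmbOfFin_unique hJ
        (fun r => memJ _ (Finset.orderEmbOfFin_mem I h (r + 1))) hmono
    -- the permutation
    set σ : Equiv.Perm (Fin (m + 1)) := (finRotate (m + 1))⁻¹ with hσdef
    have hσ : ∀ j, σ j = j - 1 := by
      intro j
      rw [hσdef]
      show (finRotate (m + 1)).symm j = j - 1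
      rw [Equiv.symm_apply_eq, finRotate_succ_apply, sub_add_cancel]
    set c : ℝ := (-1 : ℝ) ^ (m + 1 - 1) with hc
    set d : Fin (m + 1) → ℝ := fun j => if j = 0 then c else 1 with hd
    have key : (chiMat X).submatrix id (fun r => e r)
        = ((X.submatrix id (fun r => eJ r)).submatrix id σ) * Matrix.diagonal d := by
      ext r j
      rw [Matrix.mul_diagonal]
      simp only [Matrix.submatrix_apply, id_eq]
      rw [hσ, ← hfeq]
      simp only []
      rw [sub_add_cancel]
      by_cases hj : j = 0
      · subst hj
        rw [e0]
        simp only [chiMat, Matrix.of_apply, hd, if_true, hc]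
        ring
      · have := hene j hj
        simp only [chiMat, Matrix.of_apply, hd, if_neg this, if_neg hj]
        ring
    rw [key, Matrix.det_mul, Matrix.det_diagonal, Matrix.det_permute']
    have hsign : Equiv.Perm.sign σ = (-1) ^ m := by
      rw [hσdef, Equiv.Perm.sign_inv, sign_finRotate, Nat.add_sub_cancel]
    have hprod : (∏ j, d j) = c := by
      simp [hd, Finset.prod_ite_eq']
    rw [hsign, hprod, hc]
    simp only [Nat.add_sub_cancel, Units.val_pow_eq_pow_val, Units.val_neg,
      Units.val_one, Int.cast_pow, Int.cast_neg, Int.cast_one]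
    have h2 : ((-1 : ℝ) ^ m) * ((-1 : ℝ) ^ m) = 1 := by
      rw [← mul_pow]; norm_num
    linear_combination (X.submatrix id fun r => eJ r).det * h2
  · -- case 0 ∉ I
    have hene : ∀ j : Fin k, e j ≠ 0 := by
      intro j hc
      exact h0 (hc ▸ Finset.orderEmbOfFin_mem I h j)
    have hval : ∀ j : Fin k, 1 ≤ (e j).val ∧ (e j).val < n := by
      intro j
      refine ⟨?_, (e j).isLt⟩
      have : (e j).val ≠ 0 := fun hc => hene j (Fin.ext hc)
      omega
    have hmono : StrictMono (fun r : Fin k => e r - 1) := by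
      intro a b hab
      have hlt : e a < e b := e.strictMono hab
      rw [Fin.lt_def] at hlt
      have hva := hval a
      have hvb := hval b
      rw [Fin.lt_def, fin_sub_one_val, fin_sub_one_val,
        if_neg (by omega), if_neg (by omega)]
      omega
    have hfeq : (fun r : Fin k => e r - 1) = eJ :=
      Finset.orderEmbOfFin_unique hJ
        (fun r => memJ _ (Finset.orderEmbOfFin_mem I h r)) hmono
    congr 1
    ext r j
    simp only [Matrix.submatrix_apply, id_eq]
    rw [← hfeq]
    simp only [chiMat, Matrix.of_apply, if_neg (hene j)]

open Fin.NatCast Fin.CommRing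

lemma chiMat_iterate {k n : ℕ} [NeZero n] (X : Matrix (Fin k) (Fin n) ℝ) :
    ∀ m, m ≤ n → ∀ r p, (chiMat (k := k) (n := n))^[m] X r p
      = (if p.val < m then (-1 : ℝ) ^ (k - 1) else 1) * X r (p - (m : Fin n)) := by
  intro m
  induction m with
  | zero => intro _ r p; simp
  | succ m ih =>
    intro hm r p
    have hmn : m < n := by omega
    rw [Function.iterate_succ_apply']
    have hcast : ((m + 1 : ℕ) : Fin n) = (1 : Fin n) + (m : Fin n) := by
      push_cast; ring
    have hsub : p - 1 - (m : Fin n) = p - ((m + 1 : ℕ) : Fin n) := by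
      rw [sub_sub, hcast]
    by_cases hp : p = 0
    · subst hp
      simp only [chiMat, Matrix.of_apply, if_pos rfl]
      rw [ih (by omega)]
      have hv : ((0 : Fin n) - 1).val = n - 1 := by
        rw [fin_sub_one_val]; simp
      rw [hv, hsub, if_neg (show ¬ (n - 1 < m) by omega),
        if_pos (show ((0 : Fin n)).val < m + 1 by simp), one_mul]
      simp
    · have hpv : p.val ≠ 0 := fun hc => hp (Fin.ext hc)
      simp only [chiMat, Matrix.of_apply, if_neg hp]
      rw [ih (by omega)]
      have hv : (p - 1).val = p.val - 1 := by
        rw [fin_sub_one_val, if_neg hpv]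
      rw [hv, hsub]
      congr 1
      by_cases hlt : p.val < m + 1
      · rw [if_pos (by omega), if_pos hlt]
      · rw [if_neg (by omega), if_neg hlt]

/-- Cyclic symmetry of the totally nonnegative Grassmannian: `χ` preserves
nonnegativity and positivity of all Plücker coordinates, and `χ^n = (-1)^{k-1} · id`. -/
theorem cyclic_symmetry {k n : ℕ} [NeZero n] (X : Matrix (Fin k) (Fin n) ℝ) :
    ((∀ I : Finset (Fin n), I.card = k → 0 ≤ plk X I) →
      ∀ I : Finset (Fin n), I.card = k → 0 ≤ plk (chiMat X) I) ∧
    ((∀ I : Finset (Fin n), I.card = k → 0 < plk X I) →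
      ∀ I : Finset (Fin n), I.card = k → 0 < plk (chiMat X) I) ∧
    (chiMat (k := k) (n := n))^[n] X = ((-1 : ℝ) ^ (k - 1)) • X := by
  refine ⟨fun hX I hI => ?_, fun hX I hI => ?_, ?_⟩
  · rw [plk_chiMat X I hI]
    exact hX _ (by rw [Finset.card_map, hI])
  · rw [plk_chiMat X I hI]
    exact hX _ (by rw [Finset.card_map, hI])
  · ext r p
    rw [chiMat_iterate X n le_rfl r p]
    simp [p.isLt, Fin.natCast_self]
end

section
/- Gr(k,n)_{≥0} is the closure of Gr(k,n)_{>0}: let X be a k×n real matrix of rank k with Δ_I(X) ≥ 0 for every k-element subset I of {1,…,n}. Then for every ε > 0 there exists a k×n real matrix X′ with Δ_I(X′) > 0 for every k-element subset I and with every entry of X′ − X of absolute value less than ε. -/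
open Finset Matrix Equiv

/-- A nontrivial linear combination of distinct real power functions cannot vanish
at `k` distinct positive points. -/
lemma powers_indep : ∀ (k : ℕ) (e : Fin k → ℝ), StrictMono e →
    ∀ (x : Fin k → ℝ), StrictMono x → (∀ a, 0 < x a) →
    ∀ (c : Fin k → ℝ), (∀ a, ∑ b, c b * x a ^ e b = 0) → ∀ b, c b = 0 := by
  intro k
  induction k with
  | zero => intro _ _ _ _ _ _ _ b; exact b.elim0
  | succ k ih =>
    intro e he x hx hx0 c hc
    -- the function g vanishing at all the x a
    set g : ℝ → ℝ := fun t => ∑ b, c b * t ^ (e b - e 0) with hg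
    have hgx : ∀ a, g (x a) = 0 := by
      intro a
      have : g (x a) = (x a) ^ (-(e 0)) * ∑ b, c b * x a ^ e b := by
        rw [Finset.mul_sum]
        refine Finset.sum_congr rfl fun b _ => ?_
        rw [Real.rpow_sub (hx0 a), Real.rpow_neg (hx0 a).le]
        ring
      rw [this, hc a, mul_zero]
    -- derivative of g
    have hderiv : ∀ t : ℝ, 0 < t →
        HasDerivAt g (∑ b, c b * ((e b - e 0) * t ^ (e b - e 0 - 1))) t := by
      intro t ht
      exact HasDerivAt.fun_sum fun b _ =>
        ((Real.hasDerivAt_rpow_const (Or.inl ht.ne')).const_mul (c b))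
    -- Rolle points
    have rolle : ∀ a : Fin k, ∃ y ∈ Set.Ioo (x a.castSucc) (x a.succ),
        ∑ b, c b * ((e b - e 0) * y ^ (e b - e 0 - 1)) = 0 := by
      intro a
      have hlt : x a.castSucc < x a.succ := hx (Fin.castSucc_lt_succ (i := a))
      have hcont : ContinuousOn g (Set.Icc (x a.castSucc) (x a.succ)) := by
        intro t htm
        have ht : 0 < t := lt_of_lt_of_le (hx0 _) htm.1
        exact ((hderiv t ht).continuousAt).continuousWithinAt
      exact exists_hasDerivAt_eq_zero hlt hcont (by rw [hgx, hgx])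
        (fun t htm => hderiv t (lt_trans (hx0 _) htm.1))
    choose y hy hy0 using rolle
    have hy' : StrictMono y := by
      intro a b hab
      calc y a < x a.succ := (hy a).2
        _ ≤ x b.castSucc := hx.monotone (by
            rw [Fin.le_def]; simp only [Fin.val_succ, Fin.coe_castSucc]
            exact Nat.succ_le_of_lt hab)
        _ < y b := (hy b).1
    have hy0' : ∀ a, 0 < y a := fun a => lt_trans (hx0 _) (hy a).1
    -- apply induction hypothesis
    have key : ∀ b : Fin k, c b.succ * (e b.succ - e 0) = 0 := by
      refine ih (fun b => e b.succ - e 0 - 1)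
        (fun a b hab => by
          simp only []
          have := he (Fin.succ_lt_succ_iff.mpr hab); linarith)
        y hy' hy0' (fun b => c b.succ * (e b.succ - e 0)) (fun a => ?_)
      have := hy0 a
      rw [Fin.sum_univ_succ] at this
      simpa [mul_assoc, sub_self] using this
    have hcsucc : ∀ b : Fin k, c b.succ = 0 := by
      intro b
      have hpos : 0 < e b.succ - e 0 := sub_pos.mpr (he (Fin.succ_pos b))
      have := key b
      rcases mul_eq_zero.mp this with h | h
      · exact h
      · exact absurd h hpos.ne'
    -- now c 0 = 0
    have h0 := hc 0
    rw [Fin.sum_univ_succ] at h0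
    simp only [hcsucc, zero_mul, Finset.sum_const_zero, add_zero] at h0
    have : (0:ℝ) < x 0 ^ e 0 := Real.rpow_pos_of_pos (hx0 0) _
    intro b
    rcases Fin.eq_zero_or_eq_succ b with rfl | ⟨b', rfl⟩
    · rcases mul_eq_zero.mp h0 with h | h
      · exact h
      · exact absurd h this.ne'
    · exact hcsucc b'


lemma genVandermonde_ne_zero {k : ℕ} (x : Fin k → ℝ) (hx : StrictMono x)
    (hx0 : ∀ a, 0 < x a) (e : Fin k → ℝ) (he : StrictMono e) :
    Matrix.det (Matrix.of fun a b => x a ^ e b) ≠ 0 := by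
  intro h
  obtain ⟨v, hv, hmv⟩ := (Matrix.exists_mulVec_eq_zero_iff).mpr h
  refine hv (funext fun b => ?_)
  refine powers_indep k e he x hx hx0 v (fun a => ?_) b
  have := congrFun hmv a
  simpa [Matrix.mulVec, dotProduct, mul_comm] using this

lemma strictMono_convex {k : ℕ} : Convex ℝ {e : Fin k → ℝ | StrictMono e} := by
  intro e he f hf t s ht hs hts
  intro a b hab
  simp only [Pi.add_apply, Pi.smul_apply, smul_eq_mul]
  rcases eq_or_lt_of_le ht with rfl | ht'
  · have hs1 : s = 1 := by linarith
    simpa [hs1] using hf hab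
  · have h1 := mul_lt_mul_of_pos_left (he hab) ht'
    have h2 := mul_le_mul_of_nonneg_left (hf hab).le hs
    linarith

lemma genVandermonde_pos {k : ℕ} (x : Fin k → ℝ) (hx : StrictMono x)
    (hx0 : ∀ a, 0 < x a) (e : Fin k → ℝ) (he : StrictMono e) :
    0 < Matrix.det (Matrix.of fun a b => x a ^ e b) := by
  set F : (Fin k → ℝ) → ℝ := fun e => Matrix.det (Matrix.of fun a b => x a ^ e b) with hF
  have hcont : Continuous F := by
    apply Continuous.matrix_det
    apply continuous_matrix
    intro a b
    have : (fun e : Fin k → ℝ => (Matrix.of fun a b => x a ^ e b) a b)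
        = fun e : Fin k → ℝ => Real.exp (Real.log (x a) * e b) := by
      funext e; exact Real.rpow_def_of_pos (hx0 a) _
    rw [this]
    exact Real.continuous_exp.comp (continuous_const.mul (continuous_apply b))
  set e₀ : Fin k → ℝ := fun b => (b : ℕ) with he₀def
  have he₀ : StrictMono e₀ := fun a b hab => by
    exact_mod_cast Nat.cast_lt.mpr (Fin.lt_iff_val_lt_val.mp hab)
  have hF₀ : 0 < F e₀ := by
    have : F e₀ = Matrix.det (Matrix.vandermonde x) := by
      simp only [hF, he₀def, Matrix.vandermonde]
      congr 1
      ext a b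
      rw [Matrix.of_apply, Matrix.of_apply, Real.rpow_natCast]
    rw [this, Matrix.det_vandermonde]
    refine Finset.prod_pos fun i _ => Finset.prod_pos fun j hj => ?_
    exact sub_pos.mpr (hx (Finset.mem_Ioi.mp hj))
  by_contra hle
  push_neg at hle
  have hne := genVandermonde_ne_zero x hx hx0 e he
  have hlt : F e < 0 := lt_of_le_of_ne hle hne
  have hpre : IsPreconnected {e : Fin k → ℝ | StrictMono e} :=
    (strictMono_convex).isPreconnected
  have hsub := hpre.intermediate_value (a := e) (b := e₀) he he₀ hcont.continuousOn
  obtain ⟨e', he', hFe'⟩ := hsub ⟨hlt.le, hF₀.le⟩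
  exact genVandermonde_ne_zero x hx hx0 e' he' hFe'


lemma gaussian_minor_pos {k : ℕ} {q : ℝ} (hq0 : 0 < q) (hq1 : q < 1)
    (s t : Fin k → ℝ) (hs : StrictMono s) (ht : StrictMono t) :
    0 < Matrix.det (Matrix.of fun a b => q ^ ((s a - t b) ^ 2)) := by
  set r := q ^ (-2 : ℝ) with hr
  have hr1 : 1 < r := by
    rw [hr, Real.one_lt_rpow_iff_of_pos hq0]
    right; exact ⟨hq1, by norm_num⟩
  have hentry : ∀ a b, q ^ ((s a - t b) ^ 2)
      = q ^ ((s a) ^ 2) * (q ^ ((t b) ^ 2) * ((r ^ (s a)) ^ (t b))) := by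
    intro a b
    rw [hr, ← Real.rpow_mul hq0.le, ← Real.rpow_mul hq0.le,
      ← Real.rpow_add hq0, ← Real.rpow_add hq0]
    congr 1
    ring
  have hmat : (Matrix.of fun a b => q ^ ((s a - t b) ^ 2))
      = Matrix.of (fun a b => (fun a => q ^ ((s a) ^ 2)) a *
          ((fun b => q ^ ((t b) ^ 2)) b *
            (Matrix.of fun a b => (r ^ (s a)) ^ (t b)) a b)) := by
    ext a b; simpa using hentry a b
  rw [hmat]
  erw [Matrix.det_mul_column]
  erw [Matrix.det_mul_row (fun b => q ^ ((t b) ^ 2))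
      (Matrix.of fun a b => (r ^ (s a)) ^ (t b))]
  have hdet : 0 < Matrix.det (Matrix.of fun a b => (r ^ (s a)) ^ (t b)) := by
    refine genVandermonde_pos _ (fun a b hab => ?_) (fun a => Real.rpow_pos_of_pos (by positivity) _) t ht
    exact (Real.rpow_lt_rpow_left_iff hr1).mpr (hs hab)
  have h1 : (0:ℝ) < ∏ a, q ^ ((s a) ^ 2) := Finset.prod_pos fun a _ => Real.rpow_pos_of_pos hq0 _
  have h2 : (0:ℝ) < ∏ b, q ^ ((t b) ^ 2) := Finset.prod_pos fun b _ => Real.rpow_pos_of_pos hq0 _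
  positivity

-- Step 1: expansion over all functions
lemma det_mul_expand {k n : ℕ} (A : Matrix (Fin k) (Fin n) ℝ) (B : Matrix (Fin n) (Fin k) ℝ) :
    (A * B).det = ∑ f : Fin k → Fin n,
      (∏ i, B (f i) i) * (A.submatrix id f).det := by
  rw [Matrix.det_apply']
  have h1 : ∀ σ : Perm (Fin k),
      (Perm.sign σ : ℝ) * ∏ i, (A * B) (σ i) i
      = ∑ f : Fin k → Fin n, (Perm.sign σ : ℝ) * ∏ i, (A (σ i) (f i) * B (f i) i) := by
    intro σ
    rw [← Finset.mul_sum]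
    congr 1
    simp_rw [Matrix.mul_apply]
    exact Fintype.prod_sum (fun i j => A (σ i) j * B j i)
  simp_rw [h1]
  rw [Finset.sum_comm]
  refine Finset.sum_congr rfl fun f _ => ?_
  rw [Matrix.det_apply', Finset.mul_sum]
  refine Finset.sum_congr rfl fun σ _ => ?_
  rw [Finset.prod_mul_distrib]
  simp [Matrix.submatrix_apply]
  ring

noncomputable def permOf {k n : ℕ} (J : Finset (Fin n)) (hJ : J.card = k)
    (f : Fin k → Fin n) (hinj : Function.Injective f) (hmem : ∀ i, f i ∈ J) :
    Equiv.Perm (Fin k) :=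
  Equiv.ofBijective (fun i => (J.orderIsoOfFin hJ).symm ⟨f i, hmem i⟩)
    ((Finite.injective_iff_bijective).mp (fun a b hab => hinj (by
      have := congrArg (fun z => ((J.orderIsoOfFin hJ) z : Fin n)) hab
      simpa using this)))

lemma permOf_spec {k n : ℕ} (J : Finset (Fin n)) (hJ : J.card = k)
    (f : Fin k → Fin n) (hinj : Function.Injective f) (hmem : ∀ i, f i ∈ J) (i : Fin k) :
    J.orderEmbOfFin hJ (permOf J hJ f hinj hmem i) = f i := by
  unfold permOf
  rw [Equiv.ofBijective_apply, ← Finset.coe_orderIsoOfFin_apply, OrderIso.apply_symm_apply]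

lemma sum_perm_eq_sum_inj {k n : ℕ} (J : Finset (Fin n)) (hJ : J.card = k)
    (G : (Fin k → Fin n) → ℝ) :
    ∑ σ : Equiv.Perm (Fin k), G (J.orderEmbOfFin hJ ∘ σ)
    = ∑ f ∈ (Finset.univ.filter (fun f : Fin k → Fin n => Function.Injective f)).filter
        (fun f => Finset.image f Finset.univ = J), G f := by
  classical
  set emb := J.orderEmbOfFin hJ with hemb
  refine Finset.sum_bij' (fun σ _ => (emb ∘ σ : Fin k → Fin n))
    (fun f hf => permOf J hJ f
      (by simp only [Finset.mem_filter, Finset.mem_univ, true_and] at hf; exact hf.1)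
      (fun i => by
        simp only [Finset.mem_filter, Finset.mem_univ, true_and] at hf
        rw [← hf.2]; exact Finset.mem_image_of_mem f (Finset.mem_univ i)))
    ?_ ?_ ?_ ?_ ?_
  · intro σ _
    simp only [Finset.mem_filter, Finset.mem_univ, true_and]
    refine ⟨(emb.injective).comp σ.injective, ?_⟩
    refine Finset.eq_of_subset_of_card_le (fun x hx => ?_) ?_
    · obtain ⟨i, _, rfl⟩ := Finset.mem_image.mp hx
      exact J.orderEmbOfFin_mem hJ (σ i)
    · rw [Finset.card_image_of_injective _ ((emb.injective).comp σ.injective),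
        Finset.card_univ, Fintype.card_fin, hJ]
  · intro f hf; exact Finset.mem_univ _
  · intro σ _
    apply Equiv.ext
    intro i
    apply emb.injective
    rw [permOf_spec]
    rfl
  · intro f hf
    funext i
    exact permOf_spec J hJ f _ _ i
  · intro σ _
    rfl

lemma cauchy_binet {k n : ℕ} (A : Matrix (Fin k) (Fin n) ℝ) (B : Matrix (Fin n) (Fin k) ℝ) :
    (A * B).det = ∑ J ∈ Finset.powersetCard k (Finset.univ : Finset (Fin n)),
      if h : J.card = k then
        (A.submatrix id (J.orderEmbOfFin h)).det * (B.submatrix (J.orderEmbOfFin h) id).det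
      else 0 := by
  classical
  rw [det_mul_expand]
  have hzero : ∀ f : Fin k → Fin n, ¬ Function.Injective f →
      (∏ i, B (f i) i) * (A.submatrix id f).det = 0 := by
    intro f hf
    rw [Function.not_injective_iff] at hf
    obtain ⟨i, j, hij, hne⟩ := hf
    rw [Matrix.det_zero_of_column_eq hne (fun l => by simp [Matrix.submatrix_apply, hij]),
      mul_zero]
  rw [← Finset.sum_filter_of_ne (fun f _ hne => by
    by_contra hinj
    exact hne (hzero f hinj))]
  rw [← Finset.sum_fiberwise_of_maps_to (g := fun f => Finset.image f Finset.univ)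
    (t := Finset.powersetCard k (Finset.univ : Finset (Fin n)))
    (fun f hf => by
      simp only [Finset.mem_filter] at hf
      rw [Finset.mem_powersetCard]
      exact ⟨Finset.subset_univ _, by
        rw [Finset.card_image_of_injective _ hf.2, Finset.card_univ, Fintype.card_fin]⟩)]
  refine Finset.sum_congr rfl fun J hJmem => ?_
  have hJ : J.card = k := (Finset.mem_powersetCard.mp hJmem).2
  rw [dif_pos hJ]
  set emb := J.orderEmbOfFin hJ with hemb
  rw [show ((Finset.univ.filter (fun f : Fin k → Fin n => Function.Injective f)).filter
      (fun f => Finset.image f Finset.univ = J))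
      = ((Finset.univ.filter (fun f : Fin k → Fin n => Function.Injective f)).filter
      (fun f => Finset.image f Finset.univ = J)) from rfl]
  rw [← sum_perm_eq_sum_inj J hJ (fun f => (∏ i, B (f i) i) * (A.submatrix id f).det)]
  have hsub : ∀ σ : Perm (Fin k),
      (A.submatrix id (emb ∘ σ)).det = (Perm.sign σ : ℝ) * (A.submatrix id emb).det := by
    intro σ
    have : A.submatrix id (emb ∘ σ) = (A.submatrix id emb).submatrix id σ := rfl
    rw [this, Matrix.det_permute']
  simp only [hsub, Function.comp_apply]
  rw [show (B.submatrix emb id).det = ∑ σ : Perm (Fin k),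
      (Perm.sign σ : ℝ) * ∏ i, B (emb (σ i)) i from Matrix.det_apply' _]
  rw [mul_comm ((A.submatrix id emb).det), Finset.sum_mul]
  refine Finset.sum_congr rfl fun σ _ => ?_
  rw [← hemb, hsub]
  ring

lemma exists_minor_ne_zero {k n : ℕ} (X : Matrix (Fin k) (Fin n) ℝ) (hrank : X.rank = k) :
    ∃ (J : Finset (Fin n)) (h : J.card = k),
      (X.submatrix id (fun r => J.orderEmbOfFin h r)).det ≠ 0 := by
  classical
  -- columns span ℝ^k
  have hspan : Submodule.span ℝ (Set.range Xᵀ) = ⊤ := by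
    apply Submodule.eq_top_of_finrank_eq
    rw [show Set.range Xᵀ = Set.range X.col from rfl, ← Matrix.rank_eq_finrank_span_cols, hrank]
    simp [Module.finrank_fintype_fun_eq_card]
  obtain ⟨b, hbsub, hbspan, hbindep⟩ :=
    exists_linearIndependent ℝ (Set.range Xᵀ)
  rw [hspan] at hbspan
  have hbfin : b.Finite := Set.Finite.subset (Set.finite_range Xᵀ) hbsub
  haveI : Fintype b := hbfin.fintype
  have hbcard : Fintype.card b = k := by
    have h1 := finrank_span_set_eq_card hbindep
    rw [hbspan] at h1
    simp [Module.finrank_fintype_fun_eq_card, Set.toFinset_card] at h1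
    rw [← Nat.card_eq_fintype_card, Nat.card_coe_set_eq]
    exact h1.symm
  -- choose preimage indices
  have hchoice : ∀ v : b, ∃ j : Fin n, Xᵀ j = (v : Fin k → ℝ) := fun v => hbsub v.2
  choose φ hφ using hchoice
  have hφinj : Function.Injective φ := fun v w hvw => by
    apply Subtype.ext
    rw [← hφ v, ← hφ w, hvw]
  -- the finset J
  set J : Finset (Fin n) := Finset.univ.image φ with hJdef
  have hJcard : J.card = k := by
    rw [hJdef, Finset.card_image_of_injective _ hφinj, Finset.card_univ, hbcard]
  refine ⟨J, hJcard, ?_⟩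
  set emb := J.orderEmbOfFin hJcard with hemb
  -- each emb i is φ of some element of b
  have hmem : ∀ i : Fin k, ∃ v : b, φ v = emb i := by
    intro i
    have : emb i ∈ J := J.orderEmbOfFin_mem hJcard i
    rw [hJdef] at this
    obtain ⟨v, _, hv⟩ := Finset.mem_image.mp this
    exact ⟨v, hv⟩
  choose g hg using hmem
  have hginj : Function.Injective g := by
    intro i j hij
    apply (J.orderEmbOfFin hJcard).injective
    rw [← hg i, ← hg j, hij]
  -- columns of the submatrix are linearly independent
  have hcols : LinearIndependent ℝ (fun i : Fin k =>
      ((X.submatrix id (fun r => J.orderEmbOfFin hJcard r))ᵀ i)) := by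
    have heq : (fun i : Fin k => ((X.submatrix id (fun r => J.orderEmbOfFin hJcard r))ᵀ i))
        = (fun v : b => (v : Fin k → ℝ)) ∘ g := by
      funext i
      have : Xᵀ (emb i) = (g i : Fin k → ℝ) := by rw [← hg i, hφ]
      funext r
      exact congrFun this r
    rw [heq]
    exact hbindep.comp g hginj
  have hunit : IsUnit (X.submatrix id (fun r => J.orderEmbOfFin hJcard r)) :=
    Matrix.linearIndependent_cols_iff_isUnit.mp hcols
  intro hdet
  rw [Matrix.isUnit_iff_isUnit_det, hdet] at hunit
  exact (by simpa using hunit : IsUnit (0:ℝ)).ne_zero rfl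





noncomputable def gaussMat (n : ℕ) (q : ℝ) : Matrix (Fin n) (Fin n) ℝ :=
  Matrix.of fun i j => q ^ ((((i : Fin n) : ℝ) - ((j : Fin n) : ℝ)) ^ 2)

lemma plk_mul_gauss_pos {k n : ℕ} (X : Matrix (Fin k) (Fin n) ℝ) (hrank : X.rank = k)
    (hX : ∀ I : Finset (Fin n), I.card = k → 0 ≤ plk X I)
    {q : ℝ} (hq0 : 0 < q) (hq1 : q < 1)
    (I : Finset (Fin n)) (hI : I.card = k) : 0 < plk (X * gaussMat n q) I := by
  classical
  unfold plk
  rw [dif_pos hI]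
  set embI : Fin k → Fin n := fun r => I.orderEmbOfFin hI r with hembI
  have hsplit : (X * gaussMat n q).submatrix id embI
      = X * (gaussMat n q).submatrix id embI := by
    rw [Matrix.submatrix_mul X (gaussMat n q) id id embI Function.bijective_id,
      Matrix.submatrix_id_id]
  rw [hsplit, cauchy_binet]
  -- positivity of each Gauss minor
  have hgauss : ∀ (J : Finset (Fin n)) (hJ : J.card = k),
      0 < (((gaussMat n q).submatrix id embI).submatrix (J.orderEmbOfFin hJ) id).det := by
    intro J hJ
    have hmat : ((gaussMat n q).submatrix id embI).submatrix (J.orderEmbOfFin hJ) id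
        = Matrix.of fun a b =>
            q ^ ((((J.orderEmbOfFin hJ a : Fin n) : ℝ) - ((embI b : Fin n) : ℝ)) ^ 2) := by
      ext a b; rfl
    rw [hmat]
    refine gaussian_minor_pos hq0 hq1 _ _ ?_ ?_
    · intro a b hab
      exact_mod_cast Nat.cast_lt.mpr ((J.orderEmbOfFin hJ).strictMono hab)
    · intro a b hab
      exact_mod_cast Nat.cast_lt.mpr ((I.orderEmbOfFin hI).strictMono hab)
  -- sum is positive
  obtain ⟨J₀, hJ₀, hdet₀⟩ := exists_minor_ne_zero X hrank
  refine Finset.sum_pos' (fun J hJmem => ?_) ⟨J₀, ?_, ?_⟩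
  · have hJ : J.card = k := (Finset.mem_powersetCard.mp hJmem).2
    rw [dif_pos hJ]
    have h1 : 0 ≤ (X.submatrix id (J.orderEmbOfFin hJ)).det := by
      have := hX J hJ
      unfold plk at this
      rwa [dif_pos hJ] at this
    exact mul_nonneg h1 (hgauss J hJ).le
  · exact Finset.mem_powersetCard.mpr ⟨Finset.subset_univ _, hJ₀⟩
  · rw [dif_pos hJ₀]
    have h1 : 0 < (X.submatrix id (J₀.orderEmbOfFin hJ₀)).det := by
      have h2 := hX J₀ hJ₀
      unfold plk at h2
      rw [dif_pos hJ₀] at h2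
      exact lt_of_le_of_ne h2 (Ne.symm hdet₀)
    exact mul_pos h1 (hgauss J₀ hJ₀)

theorem tnn_grassmannian_closure_of_tp' {k n : ℕ}
    (X : Matrix (Fin k) (Fin n) ℝ) (hrank : X.rank = k)
    (hX : ∀ I : Finset (Fin n), I.card = k → 0 ≤ plk X I) :
    ∀ ε : ℝ, 0 < ε → ∃ X' : Matrix (Fin k) (Fin n) ℝ,
      (∀ I : Finset (Fin n), I.card = k → 0 < plk X' I) ∧
      ∀ i j, |X' i j - X i j| < ε := by
  intro ε hε
  classical
  set C : ℝ := (∑ i, ∑ s, |X i s|) + 1 with hC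
  have hC1 : 1 ≤ C := by
    have : 0 ≤ ∑ i, ∑ s, |X i s| :=
      Finset.sum_nonneg fun i _ => Finset.sum_nonneg fun s _ => abs_nonneg _
    linarith
  have hC0 : 0 < C := by linarith
  set q : ℝ := min (1/2) (ε / C) with hq
  have hq0 : 0 < q := lt_min (by norm_num) (div_pos hε hC0)
  have hq1 : q < 1 := lt_of_le_of_lt (min_le_left _ _) (by norm_num)
  refine ⟨X * gaussMat n q, fun I hI => plk_mul_gauss_pos X hrank hX hq0 hq1 I hI, ?_⟩
  intro i j
  have hdiag : gaussMat n q j j = 1 := by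
    simp [gaussMat, sub_self]
  have hdiff : (X * gaussMat n q) i j - X i j
      = ∑ s ∈ Finset.univ.erase j, X i s * gaussMat n q s j := by
    rw [Matrix.mul_apply, ← Finset.add_sum_erase _ _ (Finset.mem_univ j), hdiag, mul_one]
    ring
  rw [hdiff]
  have hGbound : ∀ s : Fin n, s ≠ j → gaussMat n q s j ≤ q := by
    intro s hs
    have hexp : (1:ℝ) ≤ (((s : Fin n) : ℝ) - ((j : Fin n) : ℝ)) ^ 2 := by
      have hne : ((s : Fin n) : ℤ) ≠ ((j : Fin n) : ℤ) := by
        simpa [Fin.val_eq_val] using hs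
      have h1 : (1:ℤ) ≤ (((s : Fin n) : ℤ) - ((j : Fin n) : ℤ)) ^ 2 := by
        rcases lt_or_gt_of_ne hne with h | h
        · nlinarith
        · nlinarith
      have : ((((s : Fin n) : ℤ) - ((j : Fin n) : ℤ)) ^ 2 : ℝ)
          = (((s : Fin n) : ℝ) - ((j : Fin n) : ℝ)) ^ 2 := by push_cast; ring
      calc (1:ℝ) ≤ ((((s : Fin n) : ℤ) - ((j : Fin n) : ℤ)) ^ 2 : ℝ) := by exact_mod_cast h1
        _ = _ := this
    calc gaussMat n q s j ≤ q ^ (1:ℝ) :=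
          Real.rpow_le_rpow_of_exponent_ge hq0 hq1.le hexp
      _ = q := Real.rpow_one q
  have hGpos : ∀ s : Fin n, 0 < gaussMat n q s j := fun s =>
    Real.rpow_pos_of_pos hq0 _
  calc |∑ s ∈ Finset.univ.erase j, X i s * gaussMat n q s j|
      ≤ ∑ s ∈ Finset.univ.erase j, |X i s * gaussMat n q s j| :=
        Finset.abs_sum_le_sum_abs _ _
    _ ≤ ∑ s ∈ Finset.univ.erase j, |X i s| * q := by
        refine Finset.sum_le_sum fun s hs => ?_
        rw [abs_mul, abs_of_pos (hGpos s)]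
        exact mul_le_mul_of_nonneg_left (hGbound s (Finset.ne_of_mem_erase hs)) (abs_nonneg _)
    _ = (∑ s ∈ Finset.univ.erase j, |X i s|) * q := by rw [Finset.sum_mul]
    _ ≤ (C - 1) * q := by
        refine mul_le_mul_of_nonneg_right ?_ hq0.le
        have h1 : ∑ s ∈ Finset.univ.erase j, |X i s| ≤ ∑ s, |X i s| :=
          Finset.sum_le_sum_of_subset_of_nonneg (Finset.erase_subset _ _)
            (fun s _ _ => abs_nonneg _)
        have h2 : ∑ s, |X i s| ≤ ∑ i', ∑ s, |X i' s| :=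
          Finset.single_le_sum (f := fun i' => ∑ s, |X i' s|)
            (fun i' _ => Finset.sum_nonneg fun s _ => abs_nonneg _) (Finset.mem_univ i)
        simp only [hC]
        linarith
    _ < C * q := by
        have : C - 1 < C := by linarith
        exact mul_lt_mul_of_pos_right this hq0
    _ ≤ C * (ε / C) := mul_le_mul_of_nonneg_left (min_le_right _ _) hC0.le
    _ = ε := by field_simp

/-- `Gr(k,n)_{≥0}` is the closure of `Gr(k,n)_{>0}`: any rank `k` real matrix with all
nonnegative maximal minors can be approximated entrywise by matrices with all
maximal minors strictly positive. -/
theorem tnn_grassmannian_closure_of_tp {k n : ℕ}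
    (X : Matrix (Fin k) (Fin n) ℝ) (hrank : X.rank = k)
    (hX : ∀ I : Finset (Fin n), I.card = k → 0 ≤ plk X I) :
    ∀ ε : ℝ, 0 < ε → ∃ X' : Matrix (Fin k) (Fin n) ℝ,
      (∀ I : Finset (Fin n), I.card = k → 0 < plk X' I) ∧
      ∀ i j, |X' i j - X i j| < ε :=
  tnn_grassmannian_closure_of_tp' X hrank hX
end

section
/- Every totally positive point of the Grassmannian lies in the orbit of the standard torus-fixed point under totally nonnegative matrices: let X be a k×n real matrix with Δ_I(X) > 0 for every k-element subset I of {1,…,n}. Then there exist an invertible k×k real matrix h and an invertible totally nonnegative n×n real matrix g such that X = h · E · g, where E is the k×n matrix whose first k columns form the k×k identity matrix and whose remaining n−k columns are zero (equivalently, h^{−1}·X equals the matrix formed by the first k rows of g). -/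
set_option maxHeartbeats 1000000

open Matrix BigOperators

/-- all minors of all orders are positive -/
def TPall {k m : ℕ} (A : Matrix (Fin k) (Fin m) ℝ) : Prop :=
  ∀ (p : ℕ) (f : Fin p → Fin k) (g : Fin p → Fin m), StrictMono f → StrictMono g →
    0 < (A.submatrix f g).det

/-- all maximal minors are positive -/
def TPmax {k m : ℕ} (A : Matrix (Fin k) (Fin m) ℝ) : Prop :=
  ∀ (g : Fin k → Fin m), StrictMono g → 0 < (A.submatrix id g).det

/-- the signed antidiagonal matrix -/
noncomputable def Jmat (k : ℕ) : Matrix (Fin k) (Fin k) ℝ :=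
  Matrix.of fun i x => if (i : ℕ) + (x : ℕ) = k - 1 then (-1 : ℝ) ^ (x : ℕ) else 0

/-- matrix bordered by the signed antidiagonal -/
noncomputable def bord {k n : ℕ} (B : Matrix (Fin k) (Fin n) ℝ) :
    Matrix (Fin k) (Fin (n + k)) ℝ :=
  Matrix.of fun i c =>
    if h : (c : ℕ) < n then B i ⟨c, h⟩
    else Jmat k i ⟨(c : ℕ) - n, by omega⟩

lemma sm_le_aux {a b : ℕ} {f : Fin a → Fin b} (hf : StrictMono f) :
    ∀ (v : ℕ) (h : v < a), v ≤ (f ⟨v, h⟩ : ℕ) := by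
  intro v
  induction v with
  | zero => intro h; exact Nat.zero_le _
  | succ w ih =>
    intro h
    have h1 : w < a := by omega
    have h2 : f ⟨w, h1⟩ < f ⟨w + 1, h⟩ := hf (by simp [Fin.lt_def])
    have h3 := ih h1
    simp only [Fin.lt_def] at h2
    omega

lemma sm_le {a b : ℕ} {f : Fin a → Fin b} (hf : StrictMono f) (i : Fin a) :
    (i : ℕ) ≤ (f i : ℕ) := by
  have := sm_le_aux hf i.1 i.2
  simpa using this

lemma sm_card {a b : ℕ} {f : Fin a → Fin b} (hf : StrictMono f) : a ≤ b := by
  have := Fintype.card_le_of_injective f hf.injective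
  simpa using this

lemma sm_id {a : ℕ} {f : Fin a → Fin a} (hf : StrictMono f) (i : Fin a) : f i = i := by
  have h1 := sm_le hf i
  have hg : StrictMono (fun j : Fin a => (f j.rev).rev) := by
    intro x y hxy
    have : f y.rev < f x.rev := hf (by simpa using hxy)
    simpa using this
  have h2 := sm_le hg i.rev
  simp only [Fin.rev_rev] at h2
  have hv1 : ((i.rev : Fin a) : ℕ) = a - 1 - (i : ℕ) := by
    rcases i with ⟨v, hv⟩; simp [Fin.val_rev]; omega
  have hv2 : (((f i).rev : Fin a) : ℕ) = a - 1 - ((f i : Fin a) : ℕ) := by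
    rcases (f i) with ⟨v, hv⟩; simp [Fin.val_rev]; omega
  rw [hv1, hv2] at h2
  have := (f i).2
  have := i.2
  apply Fin.ext
  omega

lemma AL {ι : Type*} [Fintype ι] (c : ι → ℝ) (e : ι → ℕ) (i₀ : ι) (h₀ : 0 < c i₀)
    (h : ∀ i, i ≠ i₀ → c i = 0 ∨ e i < e i₀) :
    ∃ T : ℝ, ∀ t : ℝ, T ≤ t → 0 < ∑ i, c i * t ^ (e i) := by
  classical
  rcases Nat.eq_zero_or_pos (e i₀) with h0 | hpos
  · -- every other coefficient vanishes
    refine ⟨1, fun t ht => ?_⟩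
    have : ∑ i, c i * t ^ (e i) = c i₀ * t ^ (e i₀) := by
      apply Finset.sum_eq_single_of_mem i₀ (Finset.mem_univ _)
      intro i _ hi
      rcases h i hi with hc | hlt
      · simp [hc]
      · omega
    rw [this, h0]
    simpa using h₀
  refine ⟨max 1 ((∑ i, |c i|) / c i₀ + 1), fun t ht => ?_⟩
  have ht1 : (1 : ℝ) ≤ t := le_trans (le_max_left _ _) ht
  have ht0 : (0 : ℝ) < t := by linarith
  have ht2 : (∑ i, |c i|) / c i₀ + 1 ≤ t := le_trans (le_max_right _ _) ht
  have htS : (∑ i, |c i|) < c i₀ * t := by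
    rw [div_add' _ _ _ (ne_of_gt h₀)] at ht2
    have := (div_le_iff₀ h₀).mp ht2
    nlinarith
  have key : ∀ i, i ≠ i₀ → -( |c i| * t ^ (e i₀ - 1)) ≤ c i * t ^ (e i) := by
    intro i hi
    rcases h i hi with hc | hlt
    · rw [hc]
      simp
    · have hpow : t ^ (e i) ≤ t ^ (e i₀ - 1) := by
        apply pow_le_pow_right₀ ht1; omega
      have h1 : |c i| * t ^ (e i) ≤ |c i| * t ^ (e i₀ - 1) :=
        mul_le_mul_of_nonneg_left hpow (abs_nonneg _)
      have h2 : -(|c i|) ≤ c i := neg_abs_le _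
      have hp : (0:ℝ) ≤ t ^ (e i) := by positivity
      nlinarith
  rw [← Finset.sum_erase_add _ _ (Finset.mem_univ i₀)]
  have hbound : -((∑ i, |c i|) * t ^ (e i₀ - 1)) ≤
      ∑ i ∈ Finset.univ.erase i₀, c i * t ^ (e i) := by
    have h1 : ∑ i ∈ Finset.univ.erase i₀, -(|c i| * t ^ (e i₀ - 1)) ≤
        ∑ i ∈ Finset.univ.erase i₀, c i * t ^ (e i) :=
      Finset.sum_le_sum fun i hi => key i (Finset.ne_of_mem_erase hi)
    refine le_trans ?_ h1
    have h2 : ∑ i ∈ Finset.univ.erase i₀, |c i| ≤ ∑ i, |c i| :=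
      Finset.sum_le_sum_of_subset_of_nonneg (Finset.erase_subset _ _)
        (fun i _ _ => abs_nonneg _)
    have hp : (0:ℝ) ≤ t ^ (e i₀ - 1) := by positivity
    have : ∑ i ∈ Finset.univ.erase i₀, -(|c i| * t ^ (e i₀ - 1)) =
        -((∑ i ∈ Finset.univ.erase i₀, |c i|) * t ^ (e i₀ - 1)) := by
      rw [Finset.sum_neg_distrib, ← Finset.sum_mul]
    rw [this]
    nlinarith
  have hmain : (∑ i, |c i|) * t ^ (e i₀ - 1) < c i₀ * t ^ (e i₀) := by
    have he : e i₀ = (e i₀ - 1) + 1 := by omega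
    rw [he, pow_succ]
    have hp : (0:ℝ) < t ^ (e i₀ - 1) := by positivity
    calc (∑ i, |c i|) * t ^ (e i₀ - 1) < (c i₀ * t) * t ^ (e i₀ - 1) :=
          mul_lt_mul_of_pos_right htS hp
      _ = c i₀ * (t ^ (e i₀ - 1) * t) := by ring
  linarith

lemma JL {n : ℕ} : ∀ (k p : ℕ) (f : Fin p → Fin k) (g : Fin p → Fin n),
    StrictMono f → StrictMono g → ∀ B : Matrix (Fin k) (Fin n) ℝ,
    ∃ G : Fin k → Fin (n + k),
      StrictMono G ∧
      (∀ a : Fin k, n ≤ (G a : ℕ) → ∀ x, (f x : ℕ) ≠ k - 1 - ((G a : ℕ) - n)) ∧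
      ((bord B).submatrix id G).det = (B.submatrix f g).det := by
  intro k
  induction k with
  | zero =>
    intro p f g hf hg B
    have hp : p = 0 := by have := sm_card hf; omega
    subst hp
    refine ⟨fun a => a.elim0, fun a => a.elim0, fun a => a.elim0, ?_⟩
    rw [Matrix.det_fin_zero, Matrix.det_fin_zero]
  | succ k' IH =>
    intro p f g hf hg B
    have hpk : p ≤ k' + 1 := sm_card hf
    rcases eq_or_lt_of_le hpk with heq | hlt
    · -- p = k' + 1 : no unit columns at all
      subst heq
      refine ⟨fun i => ⟨(g i : ℕ), by have := (g i).2; omega⟩, ?_, ?_, ?_⟩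
      · intro a b hab
        simp only [Fin.lt_def]
        exact hg hab
      · intro a hna x
        exfalso
        have := (g a).2
        simp only at hna
        omega
      · congr 1
        funext i j
        simp only [Matrix.submatrix_apply, id_eq, bord, Matrix.of_apply]
        rw [dif_pos (g j).2]
        have : f i = i := sm_id hf i
        rw [this]
    · -- p < k' + 1
      have hCne : (Finset.univ \ Finset.image f Finset.univ).Nonempty := by
        rw [Finset.sdiff_nonempty]
        intro hsub
        have hcard := Finset.card_le_card hsub
        rw [Finset.card_univ] at hcard
        have h2 : (Finset.image f Finset.univ).card ≤ p := by
          refine le_trans (Finset.card_image_le) ?_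
          simp
        simp only [Fintype.card_fin] at hcard
        omega
      set C := Finset.univ \ Finset.image f Finset.univ with hC
      set r₀ : Fin (k'+1) := C.min' hCne with hr₀def
      have hr₀mem : r₀ ∈ C := C.min'_mem hCne
      have hr₀ : ∀ x, f x ≠ r₀ := by
        intro x hx
        rw [hC] at hr₀mem
        rw [Finset.mem_sdiff] at hr₀mem
        exact hr₀mem.2 (Finset.mem_image.mpr ⟨x, Finset.mem_univ _, hx⟩)
      have hr₀v : ∀ x, (f x : ℕ) ≠ (r₀ : ℕ) := fun x hx => hr₀ x (Fin.ext hx)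
      have hmin : ∀ r : Fin (k'+1), (r : ℕ) < (r₀ : ℕ) → ∃ x, (f x : ℕ) = (r : ℕ) := by
        intro r hr
        by_contra hno
        push_neg at hno
        have hrC : r ∈ C := by
          rw [hC, Finset.mem_sdiff]
          refine ⟨Finset.mem_univ _, ?_⟩
          intro hmem
          rcases Finset.mem_image.mp hmem with ⟨x, _, hx⟩
          exact hno x (by rw [hx])
        have h3 := C.min'_le r hrC
        have h4 : (r₀ : ℕ) ≤ (r : ℕ) := h3
        omega
      have hr₀k : (r₀ : ℕ) ≤ k' := by have := r₀.2; omega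
      -- the reduced row map
      have hfx1 : ∀ x, ¬ ((f x : ℕ) < (r₀:ℕ)) → (f x : ℕ) - 1 < k' := by
        intro x hx
        have h1 := (f x).2
        have h2 := hr₀v x
        omega
      set f' : Fin p → Fin k' := fun x =>
        if h : (f x : ℕ) < (r₀ : ℕ) then ⟨(f x : ℕ), by omega⟩
        else ⟨(f x : ℕ) - 1, hfx1 x h⟩ with hf'def
      have hf'v : ∀ x, (f' x : ℕ) = if (f x : ℕ) < (r₀ : ℕ) then (f x : ℕ) else (f x : ℕ) - 1 := by
        intro x
        simp only [hf'def]
        by_cases h1 : (f x : ℕ) < (r₀ : ℕ)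
        · rw [dif_pos h1, if_pos h1]
        · rw [dif_neg h1, if_neg h1]
      have hf' : StrictMono f' := by
        intro a b hab
        have h1 := hf hab
        simp only [Fin.lt_def] at h1 ⊢
        rw [hf'v a, hf'v b]
        have := hr₀v a; have := hr₀v b
        split_ifs <;> omega
      set rowEmb : Fin k' → Fin (k'+1) := fun i' =>
        if h : (i' : ℕ) < (r₀ : ℕ) then ⟨(i' : ℕ), by omega⟩
        else ⟨(i' : ℕ) + 1, by have := i'.2; omega⟩ with hrowEmb
      have hrowEmbv : ∀ i', (rowEmb i' : ℕ) = if (i' : ℕ) < (r₀ : ℕ) then (i' : ℕ) else (i' : ℕ) + 1 := by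
        intro i'
        simp only [hrowEmb]
        by_cases h1 : (i' : ℕ) < (r₀ : ℕ)
        · rw [dif_pos h1, if_pos h1]
        · rw [dif_neg h1, if_neg h1]
      have hcomp : ∀ x, rowEmb (f' x) = f x := by
        intro x
        apply Fin.ext
        rw [hrowEmbv, hf'v]
        have := hr₀v x
        split_ifs <;> omega
      obtain ⟨G', hG'm, hG'c, hG'det⟩ := IH p f' g hf' hg (B.submatrix rowEmb id)
      -- every unit row used by G' is ≥ r₀
      have hcompmin : ∀ j : Fin k', n ≤ (G' j : ℕ) → (r₀ : ℕ) ≤ k' - 1 - ((G' j : ℕ) - n) := by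
        intro j hj
        by_contra hcon
        push_neg at hcon
        have hjlt := (G' j).2
        have hltk : k' - 1 - ((G' j : ℕ) - n) < k' + 1 := by omega
        obtain ⟨x, hx⟩ := hmin ⟨k' - 1 - ((G' j : ℕ) - n), hltk⟩ (by simpa using hcon)
        simp only at hx
        have hne := hG'c j hj x
        rw [hf'v] at hne
        have hxlt : ((f x : ℕ) < (r₀ : ℕ)) := by omega
        rw [if_pos hxlt] at hne
        omega
      -- the new column map
      have hnewlt : n + (k' - (r₀ : ℕ)) < n + (k' + 1) := by omega
      set G : Fin (k'+1) → Fin (n + (k'+1)) :=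
        Fin.snoc (fun j => (⟨(G' j : ℕ), by have := (G' j).2; omega⟩ : Fin (n + (k'+1))))
          ⟨n + (k' - (r₀ : ℕ)), hnewlt⟩ with hGdef
      have hGcast : ∀ j : Fin k', (G (Fin.castSucc j) : ℕ) = (G' j : ℕ) := by
        intro j
        rw [hGdef]
        rw [Fin.snoc_castSucc]
      have hGlast : (G (Fin.last k') : ℕ) = n + (k' - (r₀ : ℕ)) := by
        rw [hGdef, Fin.snoc_last]
      have hG'bound : ∀ j : Fin k', (G' j : ℕ) < n + (k' - (r₀ : ℕ)) := by
        intro j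
        rcases lt_or_ge ((G' j : ℕ)) n with h1 | h1
        · omega
        · have h2 := hcompmin j h1
          have h3 := (G' j).2
          omega
      refine ⟨G, ?_, ?_, ?_⟩
      · -- StrictMono G
        intro a b hab
        rcases Fin.eq_castSucc_or_eq_last b with ⟨jb, rfl⟩ | rfl
        · rcases Fin.eq_castSucc_or_eq_last a with ⟨ja, rfl⟩ | rfl
          · have : ja < jb := by
              simp only [Fin.lt_def, Fin.coe_castSucc] at hab ⊢; exact hab
            have := hG'm this
            simp only [Fin.lt_def] at this ⊢
            rw [hGcast, hGcast]
            exact this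
          · exfalso
            have := jb.2
            simp only [Fin.lt_def, Fin.val_last, Fin.coe_castSucc] at hab
            omega
        · rcases Fin.eq_castSucc_or_eq_last a with ⟨ja, rfl⟩ | rfl
          · simp only [Fin.lt_def]
            rw [hGcast, hGlast]
            exact hG'bound ja
          · exact absurd hab (lt_irrefl _)
      · -- row condition
        intro a hna x
        rcases Fin.eq_castSucc_or_eq_last a with ⟨j, rfl⟩ | rfl
        · rw [hGcast] at hna ⊢
          have h1 := hcompmin j hna
          have h2 := (G' j).2
          have hne := hG'c j hna x
          rw [hf'v] at hne
          intro hcon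
          have hfx : ¬ ((f x : ℕ) < (r₀ : ℕ)) := by omega
          rw [if_neg hfx] at hne
          omega
        · rw [hGlast]
          intro hcon
          have := hr₀v x
          omega
      · -- determinant identity
        have hminor : ((bord B).submatrix id G).submatrix r₀.succAbove (Fin.last k').succAbove
            = (bord (B.submatrix rowEmb id)).submatrix id G' := by
          funext i' j
          have hsA : (Fin.last k').succAbove j = Fin.castSucc j := by
            rw [Fin.succAbove_last]
          simp only [Matrix.submatrix_apply, id_eq, hsA]
          have hrow : (r₀.succAbove i' : ℕ) = (rowEmb i' : ℕ) := by
            rw [hrowEmbv]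
            rcases lt_or_ge (Fin.castSucc i') r₀ with h1 | h1
            · rw [Fin.succAbove_of_castSucc_lt _ _ h1]
              simp only [Fin.coe_castSucc]
              rw [if_pos (by simpa [Fin.lt_def] using h1)]
            · rw [Fin.succAbove_of_le_castSucc _ _ h1]
              simp only [Fin.val_succ]
              rw [if_neg (by simp only [Fin.le_def, Fin.coe_castSucc] at h1; omega)]
          rcases lt_or_ge ((G' j : ℕ)) n with hc | hc
          · -- B-column
            simp only [bord, Matrix.of_apply]
            rw [dif_pos (by rw [hGcast]; exact hc), dif_pos hc]
            simp only [Matrix.submatrix_apply, id_eq]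
            have h1 : r₀.succAbove i' = rowEmb i' := Fin.ext hrow
            rw [h1]
            congr 1
            apply Fin.ext
            show ((G (Fin.castSucc j)) : ℕ) = (G' j : ℕ)
            rw [hGcast]
          · -- J-column
            have hb := (G' j).2
            have hρ := hcompmin j hc
            simp only [bord, Matrix.of_apply]
            rw [dif_neg (by rw [hGcast]; omega), dif_neg (by omega)]
            simp only [Jmat, Matrix.of_apply]
            have hxv : ((G (Fin.castSucc j)) : ℕ) - n = (G' j : ℕ) - n := by rw [hGcast]
            rw [hxv]
            rcases lt_or_ge ((i' : ℕ)) ((r₀ : ℕ)) with h1 | h1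
            · rw [if_neg, if_neg]
              · omega
              · rw [hrow, hrowEmbv, if_pos h1]; omega
            · by_cases h2 : (i' : ℕ) + ((G' j : ℕ) - n) = k' - 1
              · rw [if_pos, if_pos h2]
                rw [hrow, hrowEmbv, if_neg (by omega)]
                omega
              · rw [if_neg, if_neg h2]
                rw [hrow, hrowEmbv, if_neg (by omega)]
                omega
        have hAlast : ∀ i : Fin (k'+1), ((bord B).submatrix id G) i (Fin.last k') =
            if (i : ℕ) = (r₀ : ℕ) then (-1 : ℝ) ^ ((k' : ℕ) - (r₀ : ℕ)) else 0 := by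
          intro i
          simp only [Matrix.submatrix_apply, id_eq]
          have : (G (Fin.last k')) = ⟨n + (k' - (r₀ : ℕ)), hnewlt⟩ := by
            apply Fin.ext; rw [hGlast]
          rw [this]
          simp only [bord, Matrix.of_apply]
          have hval : ((⟨n + (k' - (r₀ : ℕ)), hnewlt⟩ : Fin (n + (k'+1))) : ℕ)
              = n + (k' - (r₀ : ℕ)) := rfl
          rw [dif_neg (by omega)]
          simp only [Jmat, Matrix.of_apply]
          by_cases h1 : (i : ℕ) = (r₀ : ℕ)
          · rw [if_pos (by omega), if_pos h1]
            congr 1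
            omega
          · rw [if_neg (by omega), if_neg h1]
        rw [Matrix.det_succ_column ((bord B).submatrix id G) (Fin.last k')]
        rw [Finset.sum_eq_single_of_mem r₀ (Finset.mem_univ _)]
        · rw [hAlast r₀, if_pos rfl, hminor, hG'det]
          have hsign : (-1 : ℝ) ^ ((r₀ : ℕ) + ((Fin.last k' : Fin (k'+1)) : ℕ)) *
              (-1 : ℝ) ^ ((k' : ℕ) - (r₀ : ℕ)) = 1 := by
            rw [← pow_add]
            have : (r₀ : ℕ) + ((Fin.last k' : Fin (k'+1)) : ℕ) + ((k' : ℕ) - (r₀ : ℕ)) = 2 * k' := by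
              simp only [Fin.val_last]; omega
            rw [this, pow_mul]
            norm_num
          have hsub : (B.submatrix rowEmb id).submatrix f' g = B.submatrix f g := by
            funext a b
            simp only [Matrix.submatrix_apply, id_eq]
            rw [hcomp]
          rw [hsub] at *
          calc (-1 : ℝ) ^ ((r₀ : ℕ) + ((Fin.last k' : Fin (k'+1)) : ℕ)) *
                (-1 : ℝ) ^ ((k' : ℕ) - (r₀ : ℕ)) * (B.submatrix f g).det
              = 1 * (B.submatrix f g).det := by rw [hsign]
            _ = (B.submatrix f g).det := one_mul _
        · intro b _ hb
          rw [hAlast b, if_neg (fun hv => hb (Fin.ext hv))]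
          ring

lemma extend_col {k m : ℕ} (hkm : k ≤ m) (X : Matrix (Fin k) (Fin m) ℝ) (hX : TPmax X) :
    ∃ z : Fin k → ℝ,
      TPmax (Matrix.of (fun i => Fin.snoc (X i) (z i)) : Matrix (Fin k) (Fin (m+1)) ℝ) := by
  classical
  set zfun : ℝ → Fin k → ℝ := fun t i =>
    ∑ j : Fin m, (-1 : ℝ) ^ (k - 1 + (j : ℕ)) * t ^ (m - 1 - (j : ℕ)) * X i j with hzfun
  set Mt : ℝ → Matrix (Fin k) (Fin (m+1)) ℝ :=
    fun t => Matrix.of (fun i => Fin.snoc (X i) (zfun t i)) with hMt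
  have hQ : ∀ f : Fin k → Fin (m+1), StrictMono f →
      ∃ T : ℝ, ∀ t : ℝ, T ≤ t → 0 < ((Mt t).submatrix id f).det := by
    intro f hf
    by_cases hl : ∃ a, f a = Fin.last m
    · obtain ⟨a, ha⟩ := hl
      obtain ⟨κ, rfl⟩ : ∃ κ, k = κ + 1 := ⟨k - 1, by have := a.pos; omega⟩
      -- the top index maps to the last column
      have hflast : f (Fin.last κ) = Fin.last m := by
        have h1 : f a ≤ f (Fin.last κ) := hf.monotone (Fin.le_last a)
        rw [ha] at h1
        exact le_antisymm (Fin.le_last _) h1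
      have hfne : ∀ b : Fin κ, f (Fin.castSucc b) ≠ Fin.last m := by
        intro b
        have : f (Fin.castSucc b) < f (Fin.last κ) := hf (Fin.castSucc_lt_last b)
        rw [hflast] at this
        exact ne_of_lt this
      set f₀ : Fin κ → Fin m := fun b => (f (Fin.castSucc b)).castPred (hfne b) with hf₀def
      have hf₀v : ∀ b, (f₀ b : ℕ) = (f (Fin.castSucc b) : ℕ) := by
        intro b; simp [hf₀def]
      have hf₀ : StrictMono f₀ := by
        intro a' b' hab
        have := hf (show Fin.castSucc a' < Fin.castSucc b' by simpa using hab)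
        simp only [Fin.lt_def, hf₀v]
        exact this
      -- the minimal column index not hit by f₀
      have hCne : (Finset.univ \ Finset.image f₀ Finset.univ).Nonempty := by
        rw [Finset.sdiff_nonempty]
        intro hsub
        have hcard := Finset.card_le_card hsub
        rw [Finset.card_univ] at hcard
        have h2 : (Finset.image f₀ Finset.univ).card ≤ κ := by
          refine le_trans (Finset.card_image_le) (by simp)
        simp only [Fintype.card_fin] at hcard
        omega
      set j₀ : Fin m := (Finset.univ \ Finset.image f₀ Finset.univ).min' hCne with hj₀def
      have hj₀mem : j₀ ∈ Finset.univ \ Finset.image f₀ Finset.univ :=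
        (Finset.univ \ Finset.image f₀ Finset.univ).min'_mem hCne
      have hj₀ : ∀ b, (f₀ b : ℕ) ≠ (j₀ : ℕ) := by
        intro b hb
        rw [Finset.mem_sdiff] at hj₀mem
        exact hj₀mem.2 (Finset.mem_image.mpr ⟨b, Finset.mem_univ _, Fin.ext hb⟩)
      have hjmin : ∀ v : ℕ, v < (j₀ : ℕ) → ∃ b, (f₀ b : ℕ) = v := by
        intro v hv
        by_contra hno
        push_neg at hno
        have hvm : v < m := by have := j₀.2; omega
        have hrC : (⟨v, hvm⟩ : Fin m) ∈ Finset.univ \ Finset.image f₀ Finset.univ := by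
          rw [Finset.mem_sdiff]
          refine ⟨Finset.mem_univ _, ?_⟩
          intro hmem
          rcases Finset.mem_image.mp hmem with ⟨b, _, hb⟩
          exact hno b (by rw [hb])
        have h3 := (Finset.univ \ Finset.image f₀ Finset.univ).min'_le _ hrC
        have h4 : (j₀ : ℕ) ≤ v := h3
        omega
      have hj₀κ : (j₀ : ℕ) ≤ κ := by
        by_contra hcon
        push_neg at hcon
        have hφ : ∀ v : Fin (κ+1), ∃ b : Fin κ, (f₀ b : ℕ) = (v : ℕ) := by
          intro v
          exact hjmin v (by have := v.2; omega)
        choose φ hφ' using hφ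
        have hinj : Function.Injective φ := by
          intro a' b' hab
          apply Fin.ext
          rw [← hφ' a', ← hφ' b', hab]
        have := Fintype.card_le_of_injective φ hinj
        simp only [Fintype.card_fin] at this
        omega
      have hinit : ∀ v : ℕ, v < (j₀ : ℕ) → ∀ (hv : v < κ), (f₀ ⟨v, hv⟩ : ℕ) = v := by
        intro v
        induction v using Nat.strong_induction_on with
        | _ v IH2 =>
          intro hvj hv
          obtain ⟨b, hb⟩ := hjmin v hvj
          have hbv : (b : ℕ) = v := by
            rcases lt_trichotomy ((b : ℕ)) v with h1 | h1 | h1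
            · exfalso
              have h2 := IH2 (b : ℕ) h1 (by omega) b.2
              have : (⟨(b : ℕ), b.2⟩ : Fin κ) = b := Fin.ext rfl
              rw [this] at h2
              omega
            · exact h1
            · exfalso
              have := sm_le hf₀ b
              omega
          have : (⟨v, hv⟩ : Fin κ) = b := Fin.ext hbv.symm
          rw [this, hb]
      -- the sorted inserted column map
      have hinsel : ∀ i : Fin (κ+1), ¬ ((i : ℕ) ≤ (j₀ : ℕ)) → (i : ℕ) - 1 < κ := by
        intro i hi; have := i.2; omega
      set ins : Fin (κ+1) → Fin m := fun i =>
        if h : (i : ℕ) ≤ (j₀ : ℕ) then ⟨(i : ℕ), by have := j₀.2; omega⟩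
        else f₀ ⟨(i : ℕ) - 1, hinsel i h⟩ with hinsdef
      have hins : StrictMono ins := by
        intro a' b' hab
        simp only [Fin.lt_def] at hab ⊢
        simp only [hinsdef]
        by_cases h1 : (a' : ℕ) ≤ (j₀ : ℕ) <;> by_cases h2 : (b' : ℕ) ≤ (j₀ : ℕ)
        · rw [dif_pos h1, dif_pos h2]; simpa using hab
        · rw [dif_pos h1, dif_neg h2]
          have h3 := sm_le hf₀ ⟨(b' : ℕ) - 1, hinsel b' h2⟩
          have h4 := hj₀ ⟨(b' : ℕ) - 1, hinsel b' h2⟩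
          simp only at h3 h4 ⊢
          omega
        · omega
        · rw [dif_neg h1, dif_neg h2]
          have h5 : (⟨(a' : ℕ) - 1, hinsel a' h1⟩ : Fin κ) < ⟨(b' : ℕ) - 1, hinsel b' h2⟩ := by
            simp only [Fin.lt_def]; omega
          exact hf₀ h5
      have hinspos := hX ins hins
      -- common minor
      set dfun : Fin (κ+1) → ℝ := fun i => (X.submatrix i.succAbove f₀).det with hdfun
      set Dmat : Fin m → Matrix (Fin (κ+1)) (Fin (κ+1)) ℝ := fun j =>
        Matrix.of (fun a => Fin.snoc (fun b : Fin κ => X a (f₀ b)) (X a j)) with hDmat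
      have hminorD : ∀ (j : Fin m) (i : Fin (κ+1)),
          ((Dmat j).submatrix i.succAbove (Fin.last κ).succAbove) = X.submatrix i.succAbove f₀ := by
        intro j i
        funext a b
        simp only [Matrix.submatrix_apply, Fin.succAbove_last, hDmat, Matrix.of_apply,
          Fin.snoc_castSucc]
      have hminorA : ∀ (t : ℝ) (i : Fin (κ+1)),
          (((Mt t).submatrix id f).submatrix i.succAbove (Fin.last κ).succAbove)
            = X.submatrix i.succAbove f₀ := by
        intro t i
        funext a b
        simp only [Matrix.submatrix_apply, Fin.succAbove_last, hMt, Matrix.of_apply, id_eq]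
        have : f (Fin.castSucc b) = Fin.castSucc (f₀ b) := by
          rw [hf₀def]
          exact (Fin.castSucc_castPred _ _).symm
        rw [this, Fin.snoc_castSucc]
      have hDdet : ∀ j : Fin m, (Dmat j).det =
          ∑ i : Fin (κ+1), (-1 : ℝ) ^ ((i : ℕ) + κ) * X i j * dfun i := by
        intro j
        rw [Matrix.det_succ_column (Dmat j) (Fin.last κ)]
        apply Finset.sum_congr rfl
        intro i _
        rw [hminorD j i]
        have h2 : Dmat j i (Fin.last κ) = X i j := by
          simp only [hDmat, Matrix.of_apply, Fin.snoc_last]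
        rw [h2, Fin.val_last]
      set cfun : Fin m → ℝ := fun j => (-1 : ℝ) ^ (κ + (j : ℕ)) * (Dmat j).det with hcfun
      have hsum : ∀ t : ℝ, ((Mt t).submatrix id f).det
          = ∑ j : Fin m, cfun j * t ^ (m - 1 - (j : ℕ)) := by
        intro t
        rw [Matrix.det_succ_column ((Mt t).submatrix id f) (Fin.last κ)]
        have hzentry : ∀ i : Fin (κ+1), ((Mt t).submatrix id f) i (Fin.last κ) = zfun t i := by
          intro i
          simp only [Matrix.submatrix_apply, id_eq, hMt, Matrix.of_apply]
          rw [hflast, Fin.snoc_last]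
        calc ∑ i : Fin (κ+1), (-1 : ℝ) ^ ((i : ℕ) + ((Fin.last κ : Fin (κ+1)) : ℕ))
              * ((Mt t).submatrix id f) i (Fin.last κ)
              * ((((Mt t).submatrix id f)).submatrix i.succAbove (Fin.last κ).succAbove).det
            = ∑ i : Fin (κ+1), ∑ j : Fin m, (-1 : ℝ) ^ ((i : ℕ) + κ)
              * ((-1 : ℝ) ^ (κ + (j : ℕ)) * t ^ (m - 1 - (j : ℕ)) * X i j) * dfun i := by
              apply Finset.sum_congr rfl
              intro i _
              rw [hzentry i, hminorA t i]
              rw [hzfun]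
              simp only [Fin.val_last, Nat.add_sub_cancel]
              rw [Finset.mul_sum, Finset.sum_mul]
          _ = ∑ j : Fin m, ∑ i : Fin (κ+1), (-1 : ℝ) ^ ((i : ℕ) + κ)
              * ((-1 : ℝ) ^ (κ + (j : ℕ)) * t ^ (m - 1 - (j : ℕ)) * X i j) * dfun i :=
              Finset.sum_comm
          _ = ∑ j : Fin m, cfun j * t ^ (m - 1 - (j : ℕ)) := by
              apply Finset.sum_congr rfl
              intro j _
              rw [hcfun]
              simp only
              rw [hDdet j, Finset.mul_sum, Finset.sum_mul]
              apply Finset.sum_congr rfl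
              intro i _
              have hpow : (-1 : ℝ) ^ (κ + (j : ℕ)) * (-1 : ℝ) ^ ((i : ℕ) + κ)
                  = (-1 : ℝ) ^ ((i : ℕ) + (j : ℕ)) := by
                rw [← pow_add]
                have : κ + (j : ℕ) + ((i : ℕ) + κ) = ((i : ℕ) + (j : ℕ)) + 2 * κ := by ring
                rw [this, pow_add, pow_mul]
                norm_num
              calc (-1 : ℝ) ^ ((i : ℕ) + κ)
                    * ((-1 : ℝ) ^ (κ + (j : ℕ)) * t ^ (m - 1 - (j : ℕ)) * X i j) * dfun i
                  = ((-1 : ℝ) ^ (κ + (j : ℕ)) * (-1 : ℝ) ^ ((i : ℕ) + κ))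
                    * t ^ (m - 1 - (j : ℕ)) * X i j * dfun i := by ring
                _ = (-1 : ℝ) ^ ((i : ℕ) + (j : ℕ)) * t ^ (m - 1 - (j : ℕ)) * X i j * dfun i := by
                    rw [hpow]
                _ = ((-1 : ℝ) ^ (κ + (j : ℕ)) * ((-1 : ℝ) ^ ((i : ℕ) + κ) * X i j * dfun i))
                    * t ^ (m - 1 - (j : ℕ)) := by
                    rw [← hpow]; ring
      -- coefficient vanishing for columns already present
      have hzero : ∀ b : Fin κ, (Dmat (f₀ b)).det = 0 := by
        intro b
        apply Matrix.det_zero_of_column_eq (ne_of_lt (Fin.castSucc_lt_last b))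
        intro a
        simp only [hDmat, Matrix.of_apply, Fin.snoc_castSucc, Fin.snoc_last]
      -- the leading coefficient is the inserted minor
      have hposdef : (j₀ : ℕ) < κ + 1 := by omega
      have hexp : (X.submatrix id ins).det
          = ∑ i : Fin (κ+1), (-1 : ℝ) ^ ((i : ℕ) + (j₀ : ℕ)) * X i j₀ * dfun i := by
        rw [Matrix.det_succ_column (X.submatrix id ins) ⟨(j₀ : ℕ), hposdef⟩]
        apply Finset.sum_congr rfl
        intro i _
        have h1 : (X.submatrix id ins) i ⟨(j₀ : ℕ), hposdef⟩ = X i j₀ := by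
          simp only [Matrix.submatrix_apply, id_eq]
          congr 1
          simp only [hinsdef]
          rw [dif_pos (le_refl _)]
        have h2 : (X.submatrix id ins).submatrix i.succAbove
            (Fin.succAbove ⟨(j₀ : ℕ), hposdef⟩) = X.submatrix i.succAbove f₀ := by
          funext a b
          simp only [Matrix.submatrix_apply, id_eq]
          congr 1
          -- ins (succAbove ⟨j₀⟩ b) = f₀ b
          rcases lt_or_ge ((b : ℕ)) ((j₀ : ℕ)) with hb | hb
          · have hsa : Fin.succAbove ⟨(j₀ : ℕ), hposdef⟩ b = Fin.castSucc b := by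
              apply Fin.succAbove_of_castSucc_lt
              simp only [Fin.lt_def, Fin.coe_castSucc]
              exact hb
            rw [hsa]
            apply Fin.ext
            simp only [hinsdef]
            rw [dif_pos (by simp only [Fin.coe_castSucc]; omega)]
            have := hinit (b : ℕ) hb b.2
            simp only [Fin.coe_castSucc]
            have heq : (⟨(b : ℕ), b.2⟩ : Fin κ) = b := Fin.ext rfl
            rw [heq] at this
            omega
          · have hsa : Fin.succAbove ⟨(j₀ : ℕ), hposdef⟩ b = b.succ := by
              apply Fin.succAbove_of_le_castSucc
              simp only [Fin.le_def, Fin.coe_castSucc]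
              exact hb
            rw [hsa]
            apply Fin.ext
            simp only [hinsdef]
            rw [dif_neg (by simp only [Fin.val_succ]; omega)]
            apply congrArg
            apply congrArg
            exact Fin.ext (by simp only [Fin.val_succ]; omega)
        rw [h1, h2]
      have hlead : cfun j₀ = (X.submatrix id ins).det := by
        rw [hcfun]
        simp only
        rw [hDdet j₀, hexp, Finset.mul_sum]
        apply Finset.sum_congr rfl
        intro i _
        have hpow : (-1 : ℝ) ^ (κ + (j₀ : ℕ)) * (-1 : ℝ) ^ ((i : ℕ) + κ)
            = (-1 : ℝ) ^ ((i : ℕ) + (j₀ : ℕ)) := by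
          rw [← pow_add]
          have : κ + (j₀ : ℕ) + ((i : ℕ) + κ) = ((i : ℕ) + (j₀ : ℕ)) + 2 * κ := by ring
          rw [this, pow_add, pow_mul]
          norm_num
        calc (-1 : ℝ) ^ (κ + (j₀ : ℕ)) * ((-1 : ℝ) ^ ((i : ℕ) + κ) * X i j₀ * dfun i)
            = ((-1 : ℝ) ^ (κ + (j₀ : ℕ)) * (-1 : ℝ) ^ ((i : ℕ) + κ)) * X i j₀ * dfun i := by
              ring
          _ = (-1 : ℝ) ^ ((i : ℕ) + (j₀ : ℕ)) * X i j₀ * dfun i := by rw [hpow]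
      -- apply the asymptotic lemma
      obtain ⟨T, hT⟩ := AL cfun (fun j => m - 1 - (j : ℕ)) j₀
        (by rw [hlead]; exact hinspos)
        (by
          intro j hj
          rcases lt_or_ge ((j : ℕ)) ((j₀ : ℕ)) with h1 | h1
          · left
            obtain ⟨b, hb⟩ := hjmin (j : ℕ) h1
            have : f₀ b = j := Fin.ext hb
            rw [hcfun]
            simp only
            rw [← this, hzero b, mul_zero]
          · right
            have hne : (j : ℕ) ≠ (j₀ : ℕ) := fun hv => hj (Fin.ext hv)
            have := j.2
            have := j₀.2
            show m - 1 - (j : ℕ) < m - 1 - (j₀ : ℕ)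
            omega)
      exact ⟨T, fun t ht => by rw [hsum t]; exact hT t ht⟩
    · -- f misses the last column entirely
      push_neg at hl
      set f₀ : Fin k → Fin m := fun b => (f b).castPred (hl b) with hf₀def
      have hf₀ : StrictMono f₀ := by
        intro a' b' hab
        have := hf hab
        simp only [Fin.lt_def, hf₀def, Fin.coe_castPred]
        exact this
      refine ⟨0, fun t _ => ?_⟩
      have : ((Mt t).submatrix id f) = X.submatrix id f₀ := by
        funext a b
        simp only [Matrix.submatrix_apply, id_eq, hMt, Matrix.of_apply]
        have : f b = Fin.castSucc (f₀ b) := by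
          rw [hf₀def]
          exact (Fin.castSucc_castPred _ _).symm
        rw [this, Fin.snoc_castSucc]
      rw [this]
      exact hX f₀ hf₀
  -- choose a uniform threshold
  have hnonempty : Nonempty (Fin k → Fin (m+1)) := ⟨fun _ => ⟨0, Nat.succ_pos m⟩⟩
  have hne : (Finset.univ : Finset (Fin k → Fin (m+1))).Nonempty := Finset.univ_nonempty
  set Tf : (Fin k → Fin (m+1)) → ℝ := fun f =>
    if h : StrictMono f then (hQ f h).choose else 0 with hTf
  set T := Finset.univ.sup' hne Tf with hTdef
  refine ⟨zfun T, ?_⟩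
  intro f hf
  have hle : Tf f ≤ T := Finset.le_sup' Tf (Finset.mem_univ f)
  have hspec := (hQ f hf).choose_spec T
    (by simp only [hTf] at hle; rw [dif_pos hf] at hle; exact hle)
  exact hspec

lemma extend_row {r n : ℕ} (A : Matrix (Fin r) (Fin n) ℝ) (hA : TPall A) :
    ∃ v : Fin n → ℝ, TPall (Matrix.of (Fin.snoc A v) : Matrix (Fin (r+1)) (Fin n) ℝ) := by
  classical
  set vfun : ℝ → Fin n → ℝ := fun t j => t ^ ((j : ℕ) + 1) with hvfun
  set Mt : ℝ → Matrix (Fin (r+1)) (Fin n) ℝ := fun t => Matrix.of (Fin.snoc A (vfun t)) with hMt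
  have hQ : ∀ (p : ℕ) (f : Fin p → Fin (r+1)) (g : Fin p → Fin n), StrictMono f → StrictMono g →
      ∃ T : ℝ, ∀ t : ℝ, T ≤ t → 0 < ((Mt t).submatrix f g).det := by
    intro p f g hf hg
    by_cases hl : ∃ a, f a = Fin.last r
    · obtain ⟨a, ha⟩ := hl
      obtain ⟨q, rfl⟩ : ∃ q, p = q + 1 := ⟨p - 1, by have := a.pos; omega⟩
      have hflast : f (Fin.last q) = Fin.last r := by
        have h1 : f a ≤ f (Fin.last q) := hf.monotone (Fin.le_last a)
        rw [ha] at h1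
        exact le_antisymm (Fin.le_last _) h1
      have hfne : ∀ b : Fin q, f (Fin.castSucc b) ≠ Fin.last r := by
        intro b
        have : f (Fin.castSucc b) < f (Fin.last q) := hf (Fin.castSucc_lt_last b)
        rw [hflast] at this
        exact ne_of_lt this
      set f₀ : Fin q → Fin r := fun b => (f (Fin.castSucc b)).castPred (hfne b) with hf₀def
      have hf₀ : StrictMono f₀ := by
        intro a' b' hab
        have := hf (show Fin.castSucc a' < Fin.castSucc b' by simpa using hab)
        simp only [Fin.lt_def, hf₀def, Fin.coe_castPred]
        exact this
      set dfun : Fin (q+1) → ℝ := fun j => (A.submatrix f₀ (g ∘ (Fin.succAbove j))).det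
        with hdfun
      have hdpos : ∀ j, 0 < dfun j := fun j =>
        hA q f₀ (g ∘ j.succAbove) hf₀ (hg.comp (Fin.strictMono_succAbove j))
      have hexp : ∀ t : ℝ, ((Mt t).submatrix f g).det
          = ∑ j : Fin (q+1), ((-1 : ℝ) ^ (q + (j : ℕ)) * dfun j) * t ^ ((g j : ℕ) + 1) := by
        intro t
        rw [Matrix.det_succ_row ((Mt t).submatrix f g) (Fin.last q)]
        apply Finset.sum_congr rfl
        intro j _
        have hentry : ((Mt t).submatrix f g) (Fin.last q) j = t ^ ((g j : ℕ) + 1) := by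
          simp only [Matrix.submatrix_apply, hMt, Matrix.of_apply]
          rw [hflast]
          exact congrFun (Fin.snoc_last (α := fun _ => Fin n → ℝ) (p := A) (x := vfun t)) (g j)
        have hmin : ((Mt t).submatrix f g).submatrix (Fin.last q).succAbove j.succAbove
            = A.submatrix f₀ (g ∘ j.succAbove) := by
          funext a' b'
          simp only [Matrix.submatrix_apply, Fin.succAbove_last, hMt, Matrix.of_apply,
            Function.comp_apply]
          have : f (Fin.castSucc a') = Fin.castSucc (f₀ a') := by
            rw [hf₀def]
            exact (Fin.castSucc_castPred _ _).symm
          rw [this]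
          exact congrFun (Fin.snoc_castSucc (α := fun _ => Fin n → ℝ) (p := A) (x := vfun t)
            (i := f₀ a')) _
        rw [hentry, hmin, Fin.val_last]
        ring
      obtain ⟨T, hT⟩ := AL (fun j : Fin (q+1) => (-1 : ℝ) ^ (q + (j : ℕ)) * dfun j)
        (fun j => (g j : ℕ) + 1) (Fin.last q)
        (by
          have hpow : (-1 : ℝ) ^ (q + ((Fin.last q : Fin (q+1)) : ℕ)) = 1 := by
            rw [Fin.val_last]
            have : q + q = 2 * q := by ring
            rw [this, pow_mul]
            norm_num
          show 0 < (-1 : ℝ) ^ (q + ((Fin.last q : Fin (q+1)) : ℕ)) * dfun (Fin.last q)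
          rw [hpow, one_mul]
          exact hdpos _)
        (by
          intro j hj
          right
          have : g j < g (Fin.last q) := hg (by
            rcases Fin.eq_castSucc_or_eq_last j with ⟨j', rfl⟩ | rfl
            · exact Fin.castSucc_lt_last j'
            · exact absurd rfl hj)
          simp only [Fin.lt_def] at this
          show (g j : ℕ) + 1 < (g (Fin.last q) : ℕ) + 1
          omega)
      exact ⟨T, fun t ht => by rw [hexp t]; exact hT t ht⟩
    · push_neg at hl
      set f₀ : Fin p → Fin r := fun b => (f b).castPred (hl b) with hf₀def
      have hf₀ : StrictMono f₀ := by
        intro a' b' hab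
        have := hf hab
        simp only [Fin.lt_def, hf₀def, Fin.coe_castPred]
        exact this
      refine ⟨0, fun t _ => ?_⟩
      have heq : ((Mt t).submatrix f g) = A.submatrix f₀ g := by
        funext a' b'
        simp only [Matrix.submatrix_apply, hMt, Matrix.of_apply]
        have : f a' = Fin.castSucc (f₀ a') := by
          rw [hf₀def]
          exact (Fin.castSucc_castPred _ _).symm
        rw [this]
        exact congrFun (Fin.snoc_castSucc (α := fun _ => Fin n → ℝ) (p := A) (x := vfun t)
          (i := f₀ a')) _
      rw [heq]
      exact hA p f₀ g hf₀ hg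
  -- uniform threshold
  have hnonempty : Nonempty ((q : Fin (r+2)) × ((Fin (q : ℕ) → Fin (r+1)) × (Fin (q : ℕ) → Fin n))) :=
    ⟨⟨⟨0, by omega⟩, Fin.elim0, Fin.elim0⟩⟩
  have hne : (Finset.univ : Finset ((q : Fin (r+2)) × ((Fin (q : ℕ) → Fin (r+1)) × (Fin (q : ℕ) → Fin n)))).Nonempty :=
    Finset.univ_nonempty
  set Tf : ((q : Fin (r+2)) × ((Fin (q : ℕ) → Fin (r+1)) × (Fin (q : ℕ) → Fin n))) → ℝ := fun x =>
    if h : StrictMono x.2.1 ∧ StrictMono x.2.2 then (hQ _ x.2.1 x.2.2 h.1 h.2).choose else 0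
    with hTf
  set T := Finset.univ.sup' hne Tf with hTdef
  refine ⟨vfun T, ?_⟩
  intro p f g hf hg
  have hp : p ≤ r + 1 := sm_card hf
  have hle : Tf ⟨⟨p, by omega⟩, f, g⟩ ≤ T := Finset.le_sup' Tf (Finset.mem_univ _)
  have h2 : Tf ⟨⟨p, by omega⟩, f, g⟩ = (hQ p f g hf hg).choose := by
    simp only [hTf]
    rw [dif_pos ⟨hf, hg⟩]
  rw [h2] at hle
  exact (hQ p f g hf hg).choose_spec T hle

lemma tpmax_of_plk {k n : ℕ} (X : Matrix (Fin k) (Fin n) ℝ)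
    (hX : ∀ I : Finset (Fin n), I.card = k → 0 < plk X I) : TPmax X := by
  intro gmap hg
  classical
  set I := Finset.image gmap Finset.univ with hI
  have hcard : I.card = k := by
    rw [hI, Finset.card_image_of_injective _ hg.injective, Finset.card_univ, Fintype.card_fin]
  have hpos := hX I hcard
  rw [plk, dif_pos hcard] at hpos
  have heq : gmap = I.orderEmbOfFin hcard :=
    Finset.orderEmbOfFin_unique hcard
      (fun x => Finset.mem_image_of_mem _ (Finset.mem_univ x)) hg
  have : X.submatrix id gmap = X.submatrix id (fun r => I.orderEmbOfFin hcard r) := by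
    funext a b
    simp only [Matrix.submatrix_apply, id_eq]
    rw [heq]
  rw [this]
  exact hpos

lemma iter_col {k n : ℕ} (hkn : k ≤ n) (X : Matrix (Fin k) (Fin n) ℝ) (hX : TPmax X) :
    ∀ c : ℕ, ∃ M : Matrix (Fin k) (Fin (n + c)) ℝ, TPmax M ∧
      ∀ i (j : Fin n), M i (Fin.castLE (by omega) j) = X i j := by
  intro c
  induction c with
  | zero => exact ⟨X, hX, fun i j => rfl⟩
  | succ c IH =>
    obtain ⟨M, hM, hcompat⟩ := IH
    obtain ⟨z, hz⟩ := extend_col (le_trans hkn (Nat.le_add_right n c)) M hM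
    refine ⟨Matrix.of (fun i => Fin.snoc (M i) (z i)), hz, ?_⟩
    intro i j
    have h1 : (Fin.castLE (by omega : n ≤ n + (c+1)) j)
        = Fin.castSucc (Fin.castLE (by omega : n ≤ n + c) j) := Fin.ext rfl
    rw [h1]
    simp only [Matrix.of_apply, Fin.snoc_castSucc]
    exact hcompat i j

lemma iter_row {k n : ℕ} (Y : Matrix (Fin k) (Fin n) ℝ) (hY : TPall Y) :
    ∀ c : ℕ, ∃ G : Matrix (Fin (k + c)) (Fin n) ℝ, TPall G ∧
      ∀ (i : Fin k) j, G (Fin.castLE (by omega) i) j = Y i j := by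
  intro c
  induction c with
  | zero => exact ⟨Y, hY, fun i j => rfl⟩
  | succ c IH =>
    obtain ⟨G, hG, hcompat⟩ := IH
    obtain ⟨v, hv⟩ := extend_row G hG
    refine ⟨Matrix.of (Fin.snoc G v), hv, ?_⟩
    intro i j
    have h1 : (Fin.castLE (by omega : k ≤ k + (c+1)) i)
        = Fin.castSucc (Fin.castLE (by omega : k ≤ k + c) i) := Fin.ext rfl
    rw [h1]
    simp only [Matrix.of_apply, Fin.snoc_castSucc]
    exact (congrFun (Fin.snoc_castSucc (α := fun _ => Fin n → ℝ) (p := G) (x := v)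
      (i := Fin.castLE (by omega) i)) j).trans (hcompat i j)

/-- Every totally positive point of the Grassmannian lies in the orbit of the standard
torus-fixed point `e_{[k]}` under invertible totally nonnegative matrices:
`X = h · E · g` with `h ∈ GL(k,ℝ)`, `g ∈ GL(n,ℝ)_{≥0}`, and `E = (I_k | 0)`. -/
theorem tp_point_in_tnn_orbit {k n : ℕ} (hkn : k ≤ n)
    (X : Matrix (Fin k) (Fin n) ℝ)
    (hX : ∀ I : Finset (Fin n), I.card = k → 0 < plk X I) :
    ∃ (h : Matrix (Fin k) (Fin k) ℝ) (g : Matrix (Fin n) (Fin n) ℝ),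
      IsUnit h.det ∧ IsUnit g.det ∧ TotallyNonneg g ∧
      X = h * (Matrix.of fun (i : Fin k) (j : Fin n) =>
        if (j : ℕ) = (i : ℕ) then (1 : ℝ) else 0) * g := by
  classical
  have hXmax : TPmax X := tpmax_of_plk X hX
  obtain ⟨M, hM, hcompat⟩ := iter_col hkn X hXmax k
  have hembmono : StrictMono (fun x : Fin k => (⟨n + (x : ℕ), by have := x.2; omega⟩ : Fin (n + k))) := by
    intro a b hab
    simp only [Fin.lt_def]
    simp only [Fin.lt_def] at hab
    omega
  set Z : Matrix (Fin k) (Fin k) ℝ :=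
    M.submatrix id (fun x : Fin k => (⟨n + (x : ℕ), by have := x.2; omega⟩ : Fin (n + k))) with hZ
  have hdetZ : 0 < Z.det := hM _ hembmono
  have hZunit : IsUnit Z.det := isUnit_iff_ne_zero.mpr (ne_of_gt hdetZ)
  set W := Jmat k * Z⁻¹ with hW
  set Y := W * X with hY
  have hWZ : W * Z = Jmat k := by
    rw [hW, Matrix.mul_assoc, Matrix.nonsing_inv_mul Z hZunit, Matrix.mul_one]
  have hbord : bord Y = W * M := by
    funext i c
    rcases lt_or_ge ((c : ℕ)) n with hc | hc
    · have hMc : ∀ l, M l c = X l ⟨(c : ℕ), hc⟩ := by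
        intro l
        have h1 : c = Fin.castLE (by omega) (⟨(c : ℕ), hc⟩ : Fin n) := Fin.ext rfl
        conv_lhs => rw [h1]
        rw [hcompat]
      simp only [bord, Matrix.of_apply]
      rw [dif_pos hc]
      rw [hY]
      simp only [Matrix.mul_apply]
      exact Finset.sum_congr rfl fun l _ => by rw [hMc l]
    · have hcn : (c : ℕ) - n < k := by have := c.2; omega
      have hMc : ∀ l, M l c = Z l ⟨(c : ℕ) - n, hcn⟩ := by
        intro l
        rw [hZ]
        simp only [Matrix.submatrix_apply, id_eq]
        congr 1
        exact Fin.ext (by simp only; omega)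
      have h2 : (W * M) i c = (W * Z) i ⟨(c : ℕ) - n, hcn⟩ := by
        simp only [Matrix.mul_apply]
        exact Finset.sum_congr rfl fun l _ => by rw [hMc l]
      rw [h2, hWZ]
      simp only [bord, Matrix.of_apply]
      rw [dif_neg (by omega)]
  have hmulsub : ∀ G : Fin k → Fin (n + k),
      ((W * M).submatrix id G) = W * (M.submatrix id G) := by
    intro G
    funext a b
    simp only [Matrix.submatrix_apply, id_eq, Matrix.mul_apply]
  have hdetW : 0 < W.det := by
    obtain ⟨G, hGm, _, hGdet⟩ := JL k 0 Fin.elim0 Fin.elim0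
      (fun a => a.elim0) (fun a => a.elim0) Y
    have h1 : (Y.submatrix Fin.elim0 Fin.elim0).det = 1 := Matrix.det_fin_zero
    rw [h1, hbord, hmulsub G, Matrix.det_mul] at hGdet
    have h3 := hM G hGm
    nlinarith [hGdet, h3]
  have hWunit : IsUnit W.det := isUnit_iff_ne_zero.mpr (ne_of_gt hdetW)
  have hYTP : TPall Y := by
    intro p f g hf hg
    obtain ⟨G, hGm, _, hGdet⟩ := JL k p f g hf hg Y
    rw [hbord, hmulsub G, Matrix.det_mul] at hGdet
    rw [← hGdet]
    exact mul_pos hdetW (hM G hGm)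
  obtain ⟨Gbig, hGbig, hGcomp⟩ := iter_row Y hYTP (n - k)
  have hnk : n = k + (n - k) := by omega
  set gmat : Matrix (Fin n) (Fin n) ℝ := Gbig.submatrix (fun i => Fin.cast hnk i) id with hgmat
  have hgTP : TPall gmat := by
    intro p f g hf hg
    have h1 : gmat.submatrix f g = Gbig.submatrix ((fun i => Fin.cast hnk i) ∘ f) g := rfl
    rw [h1]
    refine hGbig p _ g ?_ hg
    intro a b hab
    simp only [Function.comp_apply, Fin.lt_def, Fin.coe_cast]
    exact hf hab
  have hdetg : 0 < gmat.det := by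
    have := hgTP n id id strictMono_id strictMono_id
    simpa using this
  refine ⟨W⁻¹, gmat, ?_, ?_, ?_, ?_⟩
  · exact IsUnit.of_mul_eq_one _ (Matrix.det_nonsing_inv_mul_det W hWunit)
  · exact isUnit_iff_ne_zero.mpr (ne_of_gt hdetg)
  · intro m f g hf hg
    exact le_of_lt (hgTP m f g hf hg)
  · have hEg : (Matrix.of fun (i : Fin k) (j : Fin n) =>
        if (j : ℕ) = (i : ℕ) then (1 : ℝ) else 0) * gmat = Y := by
      funext i j
      simp only [Matrix.mul_apply, Matrix.of_apply]
      rw [Finset.sum_eq_single (Fin.castLE hkn i)]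
      · rw [if_pos (show ((Fin.castLE hkn i : Fin n) : ℕ) = (i : ℕ) from rfl), one_mul]
        have h1 : (Fin.cast hnk (Fin.castLE hkn i)) = Fin.castLE (by omega) i := Fin.ext rfl
        show gmat (Fin.castLE hkn i) j = Y i j
        rw [hgmat]
        simp only [Matrix.submatrix_apply, id_eq]
        rw [h1]
        exact hGcomp i j
      · intro b _ hb
        rw [if_neg (fun hv => hb (Fin.ext (by simpa using hv))), zero_mul]
      · intro hmem
        exact absurd (Finset.mem_univ _) hmem
    rw [Matrix.mul_assoc, hEg, hY, ← Matrix.mul_assoc, Matrix.nonsing_inv_mul W hWunit,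
      Matrix.one_mul]
end
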